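/- arXiv:2502.03027 — 13 statements merged into one kernel-verified Lean document; each statement's English description precedes it below -/
import Mathlib

section
/- Let q : ℝ × ℝ → ℂ be twice continuously differentiable. Define the 2×2 matrices U(x,t) = [[0, q(x,t)], [−conj(q(−x,t)), 0]] and V(x,t,k) = [[i·q(x,t)·conj(q(−x,t)), 2k·q(x,t) + i·q_x(x,t)], [−2k·conj(q(−x,t)) + i·∂_x(conj(q(−x,t))), −i·q(x,t)·conj(q(−x,t))]], and let σ₃ = diag(1,−1). Then the zero-curvature (compatibility) condition U_t − V_x + [U − ik σ₃, V − 2ik² σ₃] = 0 holds for all x,t ∈ ℝ and all k ∈ ℂ if and only if q satisfies the nonlocal nonlinear Schrödinger equation i q_t(x,t) + q_{xx}(x,t) + 2 q(x,t)² conj(q(−x,t)) = 0 for all x,t ∈ ℝ. -/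
noncomputable section

open Complex

/-- The Pauli matrix σ₃ = diag(1, -1). -/
def sigma3 : Matrix (Fin 2) (Fin 2) ℂ := !![1, 0; 0, -1]

/-- The matrix U(x,t) of the Lax pair of the nonlocal NLS equation. -/
def Umat (q : ℝ × ℝ → ℂ) (x t : ℝ) : Matrix (Fin 2) (Fin 2) ℂ :=
  !![0, q (x, t);
     -(starRingEnd ℂ) (q (-x, t)), 0]

/-- The matrix V(x,t,k) of the Lax pair of the nonlocal NLS equation. -/
def Vmat (q : ℝ × ℝ → ℂ) (x t : ℝ) (k : ℂ) : Matrix (Fin 2) (Fin 2) ℂ :=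
  !![Complex.I * q (x, t) * (starRingEnd ℂ) (q (-x, t)),
     2 * k * q (x, t) + Complex.I * deriv (fun u : ℝ => q (u, t)) x;
     -(2 * k * (starRingEnd ℂ) (q (-x, t))) +
       Complex.I * deriv (fun u : ℝ => (starRingEnd ℂ) (q (-u, t))) x,
     -(Complex.I * q (x, t) * (starRingEnd ℂ) (q (-x, t)))]



private lemma cdFst (q : ℝ × ℝ → ℂ) (hq : ContDiff ℝ 2 q) (t : ℝ) :
    ContDiff ℝ 2 (fun u : ℝ => q (u, t)) :=
  hq.comp (contDiff_id.prodMk contDiff_const)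

private lemma cdSnd (q : ℝ × ℝ → ℂ) (hq : ContDiff ℝ 2 q) (x : ℝ) :
    ContDiff ℝ 2 (fun s : ℝ => q (x, s)) :=
  hq.comp (contDiff_const.prodMk contDiff_id)

private lemma diff_deriv (f : ℝ → ℂ) (hf : ContDiff ℝ 2 f) :
    Differentiable ℝ (deriv f) := by
  have h2 : (2 : WithTop ℕ∞) = 1 + 1 := by norm_num
  rw [h2] at hf
  exact ((contDiff_succ_iff_deriv.mp hf).2.2).differentiable one_ne_zero

private lemma derivR_eq (q : ℝ × ℝ → ℂ) (hq : ContDiff ℝ 2 q) (t : ℝ) :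
    deriv (fun u : ℝ => (starRingEnd ℂ) (q (-u, t)))
      = fun x => -(starRingEnd ℂ) (deriv (fun u : ℝ => q (u, t)) (-x)) := by
  funext x
  have h1 : HasDerivAt (fun u : ℝ => q (u, t)) (deriv (fun u : ℝ => q (u, t)) (-x)) (-x) :=
    ((cdFst q hq t).differentiable two_ne_zero (-x)).hasDerivAt
  have h2 := h1.scomp x (hasDerivAt_neg' x)
  simp only [Function.comp_def, neg_smul, one_smul] at h2
  have h3 := h2.star
  simp only [starRingEnd_apply]
  rw [h3.deriv]
  simp

private lemma hasDerivR (q : ℝ × ℝ → ℂ) (hq : ContDiff ℝ 2 q) (t x : ℝ) :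
    HasDerivAt (fun u : ℝ => (starRingEnd ℂ) (q (-u, t)))
      (-(starRingEnd ℂ) (deriv (fun u : ℝ => q (u, t)) (-x))) x := by
  have h1 : HasDerivAt (fun u : ℝ => q (u, t)) (deriv (fun u : ℝ => q (u, t)) (-x)) (-x) :=
    ((cdFst q hq t).differentiable two_ne_zero (-x)).hasDerivAt
  have h2 := h1.scomp x (hasDerivAt_neg' x)
  simp only [Function.comp_def, neg_smul, one_smul] at h2
  have h3 := h2.star
  simp only [starRingEnd_apply]
  simpa using h3

private lemma derivderivR_eq (q : ℝ × ℝ → ℂ) (hq : ContDiff ℝ 2 q) (t x : ℝ) :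
    deriv (fun x' : ℝ => deriv (fun u : ℝ => (starRingEnd ℂ) (q (-u, t))) x') x
      = (starRingEnd ℂ) (deriv (deriv (fun u : ℝ => q (u, t))) (-x)) := by
  rw [derivR_eq q hq t]
  have h1 : HasDerivAt (deriv (fun u : ℝ => q (u, t)))
      (deriv (deriv (fun u : ℝ => q (u, t))) (-x)) (-x) :=
    (diff_deriv _ (cdFst q hq t) (-x)).hasDerivAt
  have h2 := h1.scomp x (hasDerivAt_neg' x)
  simp only [Function.comp_def, neg_smul, one_smul] at h2
  have h3 := h2.star.neg
  simp only [starRingEnd_apply]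
  rw [show deriv (fun x' => -star (deriv (fun u : ℝ => q (u, t)) (-x'))) x = _ from h3.deriv]
  simp

/-- time derivative of the (1,0) entry of U -/
private lemma dUt10 (q : ℝ × ℝ → ℂ) (hq : ContDiff ℝ 2 q) (x t : ℝ) :
    deriv (fun s : ℝ => -(starRingEnd ℂ) (q (-x, s))) t
      = -(starRingEnd ℂ) (deriv (fun s : ℝ => q (-x, s)) t) := by
  have h1 : HasDerivAt (fun s : ℝ => q (-x, s)) (deriv (fun s : ℝ => q (-x, s)) t) t :=
    ((cdSnd q hq (-x)).differentiable two_ne_zero t).hasDerivAt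
  have h3 := h1.star.neg
  simp only [starRingEnd_apply]
  exact h3.deriv

private lemma dVx00 (q : ℝ × ℝ → ℂ) (hq : ContDiff ℝ 2 q) (t x : ℝ) :
    deriv (fun x' : ℝ => Complex.I * q (x', t) * (starRingEnd ℂ) (q (-x', t))) x
      = Complex.I * deriv (fun u : ℝ => q (u, t)) x * (starRingEnd ℂ) (q (-x, t))
        + Complex.I * q (x, t) * -((starRingEnd ℂ) (deriv (fun u : ℝ => q (u, t)) (-x))) := by
  have ha : HasDerivAt (fun u : ℝ => q (u, t)) (deriv (fun u : ℝ => q (u, t)) x) x :=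
    ((cdFst q hq t).differentiable two_ne_zero x).hasDerivAt
  have hb := hasDerivR q hq t x
  have h := ((ha.const_mul Complex.I).mul hb)
  exact h.deriv

private lemma dVx01 (q : ℝ × ℝ → ℂ) (hq : ContDiff ℝ 2 q) (t x : ℝ) (k : ℂ) :
    deriv (fun x' : ℝ => 2 * k * q (x', t) + Complex.I * deriv (fun u : ℝ => q (u, t)) x') x
      = 2 * k * deriv (fun u : ℝ => q (u, t)) x
        + Complex.I * deriv (deriv (fun u : ℝ => q (u, t))) x := by
  have ha : HasDerivAt (fun u : ℝ => q (u, t)) (deriv (fun u : ℝ => q (u, t)) x) x :=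
    ((cdFst q hq t).differentiable two_ne_zero x).hasDerivAt
  have hb : HasDerivAt (deriv (fun u : ℝ => q (u, t)))
      (deriv (deriv (fun u : ℝ => q (u, t))) x) x :=
    (diff_deriv _ (cdFst q hq t) x).hasDerivAt
  exact ((ha.const_mul (2 * k)).add (hb.const_mul Complex.I)).deriv

private lemma dVx10 (q : ℝ × ℝ → ℂ) (hq : ContDiff ℝ 2 q) (t x : ℝ) (k : ℂ) :
    deriv (fun x' : ℝ => -(2 * k * (starRingEnd ℂ) (q (-x', t)))
        + Complex.I * deriv (fun u : ℝ => (starRingEnd ℂ) (q (-u, t))) x') x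
      = -(2 * k * -((starRingEnd ℂ) (deriv (fun u : ℝ => q (u, t)) (-x))))
        + Complex.I * (starRingEnd ℂ) (deriv (deriv (fun u : ℝ => q (u, t))) (-x)) := by
  have hb := hasDerivR q hq t x
  have h1 : HasDerivAt (deriv (fun u : ℝ => q (u, t)))
      (deriv (deriv (fun u : ℝ => q (u, t))) (-x)) (-x) :=
    (diff_deriv _ (cdFst q hq t) (-x)).hasDerivAt
  have h2 := h1.scomp x (hasDerivAt_neg' x)
  simp only [Function.comp_def, neg_smul, one_smul] at h2
  have h3 := h2.star.neg
  -- h3 : HasDerivAt (fun x' => -star (deriv Q (-x'))) (-star (-deriv (deriv Q) (-x))) x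
  have hgoal := ((hb.const_mul (2 * k)).neg.add (by
      simpa only [starRingEnd_apply, Pi.neg_apply] using h3.const_mul Complex.I :
      HasDerivAt (fun x' : ℝ => Complex.I * (-(starRingEnd ℂ) (deriv (fun u : ℝ => q (u, t)) (-x'))))
        (Complex.I * -(starRingEnd ℂ) (-(deriv (deriv (fun u : ℝ => q (u, t))) (-x)))) x))
  rw [show (fun x' : ℝ => -(2 * k * (starRingEnd ℂ) (q (-x', t)))
        + Complex.I * deriv (fun u : ℝ => (starRingEnd ℂ) (q (-u, t))) x')
      = (fun x' : ℝ => -(2 * k * (starRingEnd ℂ) (q (-x', t)))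
        + Complex.I * (-(starRingEnd ℂ) (deriv (fun u : ℝ => q (u, t)) (-x')))) by
    funext x'
    rw [derivR_eq q hq t]]
  rw [show deriv (fun x' : ℝ => -(2 * k * (starRingEnd ℂ) (q (-x', t))) + Complex.I * (-(starRingEnd ℂ) (deriv (fun u : ℝ => q (u, t)) (-x')))) x = _ from hgoal.deriv]
  simp only [map_neg]
  ring

/-- The zero-curvature (compatibility) condition `U_t − V_x + [U − ikσ₃, V − 2ik²σ₃] = 0` holds
for all `x, t, k` if and only if `q` satisfies the nonlocal nonlinear Schrödinger equation
`i q_t + q_xx + 2 q² conj(q(−x,t)) = 0`. -/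
theorem zero_curvature_iff_NNLS (q : ℝ × ℝ → ℂ) (hq : ContDiff ℝ 2 q) :
    (∀ (x t : ℝ) (k : ℂ),
      (Matrix.of fun i j => deriv (fun s : ℝ => Umat q x s i j) t)
        - (Matrix.of fun i j => deriv (fun x' : ℝ => Vmat q x' t k i j) x)
        + ((Umat q x t - (Complex.I * k) • sigma3) * (Vmat q x t k - (2 * Complex.I * k ^ 2) • sigma3)
            - (Vmat q x t k - (2 * Complex.I * k ^ 2) • sigma3) * (Umat q x t - (Complex.I * k) • sigma3))
        = 0)
    ↔ (∀ x t : ℝ,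
        Complex.I * deriv (fun s : ℝ => q (x, s)) t
          + deriv (fun x' : ℝ => deriv (fun u : ℝ => q (u, t)) x') x
          + 2 * (q (x, t)) ^ 2 * (starRingEnd ℂ) (q (-x, t)) = 0) := by
  constructor
  · intro h x t
    have h01 := congrArg (fun M : Matrix (Fin 2) (Fin 2) ℂ => M 0 1) (h x t 0)
    simp only [Umat, Vmat, sigma3, Matrix.add_apply, Matrix.sub_apply, Matrix.of_apply,
      Matrix.mul_apply, Fin.sum_univ_two, Matrix.smul_apply, Matrix.zero_apply, smul_eq_mul,
      Matrix.cons_val', Matrix.cons_val_zero, Matrix.cons_val_one, Matrix.head_cons,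
      Matrix.head_fin_const, Matrix.empty_val', Matrix.cons_val_fin_one,
      mul_zero, zero_mul, zero_add, add_zero, ne_eq, zero_pow, sub_zero, zero_sub] at h01
    rw [deriv_const_mul_field] at h01
    linear_combination Complex.I * h01 + (deriv (fun x' : ℝ => deriv (fun u : ℝ => q (u, t)) x') x + 2 * (q (x, t)) ^ 2 * (starRingEnd ℂ) (q (-x, t))) * Complex.I_sq
  · intro h x t k
    have hx := h x t
    have hmx := h (-x) t
    simp only [neg_neg] at hmx
    have hc := congrArg (starRingEnd ℂ) hmx
    simp only [map_add, map_mul, map_pow, map_ofNat, map_zero, Complex.conj_conj,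
      Complex.conj_I] at hc
    ext i j
    fin_cases i <;> fin_cases j <;>
      simp only [Umat, Vmat, sigma3, Matrix.add_apply, Matrix.sub_apply, Matrix.of_apply,
        Matrix.mul_apply, Fin.sum_univ_two, Matrix.smul_apply, Matrix.zero_apply, smul_eq_mul,
        Fin.mk_zero, Fin.mk_one, Fin.isValue,
        Matrix.cons_val', Matrix.cons_val_zero, Matrix.cons_val_one, Matrix.head_cons,
        Matrix.head_fin_const, Matrix.empty_val', Matrix.cons_val_fin_one, deriv_const']
    · rw [dVx00 q hq t x]
      simp only [derivR_eq q hq t]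
      ring
    · rw [dVx01 q hq t x k]
      linear_combination (-Complex.I) * hx + (deriv (fun s : ℝ => q (x, s)) t - 2 * k * deriv (fun u : ℝ => q (u, t)) x) * Complex.I_sq
    · rw [dUt10 q hq x t, dVx10 q hq t x k]
      simp only [derivR_eq q hq t]
      linear_combination (-Complex.I) * hc + (-(starRingEnd ℂ) (deriv (fun s : ℝ => q (-x, s)) t) - 2 * k * (starRingEnd ℂ) (deriv (fun u : ℝ => q (u, t)) (-x))) * Complex.I_sq
    · simp only [deriv.fun_neg]
      rw [dVx00 q hq t x]
      simp only [derivR_eq q hq t]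
      ring

end
end

section
/- Let A > 0, B ∈ ℝ, R > 0, and let a₁(k) = 1 + A² e^{4ikR} / (4(k² − B²)) for complex k ≠ ±B. If there exists a positive integer n such that π² n² = R² (4B² − A²), then the two real points k = πn/(2R) and k = −πn/(2R), which equal ±(1/2)√(4B² − A²), are simple zeros of a₁. -/
open Complex

lemma a1_key (A B R x : ℝ) (hA : 0 < A) (hR : 0 < R) (a₁ : ℂ → ℂ)
    (ha₁ : ∀ k : ℂ, a₁ k =
      1 + (A : ℂ) ^ 2 * Complex.exp (4 * Complex.I * k * (R : ℂ)) / (4 * (k ^ 2 - (B : ℂ) ^ 2)))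
    (hexp : Complex.exp (4 * Complex.I * (x : ℂ) * (R : ℂ)) = 1)
    (hx : (x : ℂ) ^ 2 - (B : ℂ) ^ 2 = -(A : ℂ) ^ 2 / 4) :
    a₁ (x : ℂ) = 0 ∧ deriv a₁ (x : ℂ) ≠ 0 := by
  have hA' : (A : ℂ) ≠ 0 := by exact_mod_cast hA.ne'
  have hden : (4 : ℂ) * ((x : ℂ) ^ 2 - (B : ℂ) ^ 2) ≠ 0 := by
    rw [hx]
    field_simp
    exact neg_ne_zero.mpr (pow_ne_zero 2 hA')
  constructor
  · rw [ha₁, hexp, hx]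
    field_simp
    ring
  · have haeq : a₁ = fun k => 1 + (A : ℂ) ^ 2 * Complex.exp (4 * Complex.I * k * (R : ℂ)) /
        (4 * (k ^ 2 - (B : ℂ) ^ 2)) := funext ha₁
    set c : ℂ := (x : ℂ) with hc
    have h1 : HasDerivAt (fun k : ℂ => 4 * Complex.I * k * (R : ℂ)) (4 * Complex.I * (R : ℂ)) c := by
      simpa using ((hasDerivAt_id c).const_mul (4 * Complex.I)).mul_const (R : ℂ)
    have h2 := h1.cexp
    have h3 : HasDerivAt (fun k : ℂ => 4 * (k ^ 2 - (B : ℂ) ^ 2)) (4 * (2 * c ^ 1)) c :=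
      ((hasDerivAt_pow 2 c).sub_const _).const_mul 4
    have h4 := ((h2.const_mul ((A : ℂ) ^ 2)).div h3 hden).const_add 1
    have hderiv := h4.deriv
    rw [haeq]
    rw [show deriv (fun k : ℂ => 1 + (A : ℂ) ^ 2 * Complex.exp (4 * Complex.I * k * (R : ℂ)) /
        (4 * (k ^ 2 - (B : ℂ) ^ 2))) c = _ from hderiv]
    have hval : ((A:ℂ)^2 * (Complex.exp (4 * Complex.I * c * (R:ℂ)) * (4 * Complex.I * (R:ℂ))) *
          (4 * (c ^ 2 - (B:ℂ) ^ 2)) - (A:ℂ)^2 * Complex.exp (4 * Complex.I * c * (R:ℂ)) *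
          (4 * (2 * c ^ 1))) / (4 * (c ^ 2 - (B:ℂ) ^ 2)) ^ 2
        = ((-8 * x / A ^ 2 : ℝ) : ℂ) + ((-4 * R : ℝ) : ℂ) * Complex.I := by
      rw [hexp, hx]
      push_cast
      field_simp
      ring
    rw [hval]
    intro h0
    rw [Complex.ext_iff] at h0
    simp at h0
    have him := h0.2
    rw [show (-(8 * (x:ℂ))) / (A:ℂ) ^ 2 = ((-(8 * x) / A ^ 2 : ℝ) : ℂ) by push_cast; ring] at him
    rw [Complex.ofReal_im] at him
    have hR0 : R = 0 := by linarith
    exact hR.ne' hR0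

/-- For the pure step initial datum with shift `R`, if `π²n² = R²(4B² − A²)` for some positive
integer `n`, then `k = ±πn/(2R) = ±(1/2)√(4B² − A²)` are simple real zeros of the spectral
function `a₁(k) = 1 + A²e^{4ikR}/(4(k² − B²))`. -/
theorem a1_real_zeros_case1 (A B R : ℝ) (hA : 0 < A) (hR : 0 < R)
    (a₁ : ℂ → ℂ)
    (ha₁ : ∀ k : ℂ, a₁ k =
      1 + (A : ℂ) ^ 2 * Complex.exp (4 * Complex.I * k * (R : ℂ)) / (4 * (k ^ 2 - (B : ℂ) ^ 2)))
    (n : ℕ) (hn : 0 < n)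
    (hcond : Real.pi ^ 2 * (n : ℝ) ^ 2 = R ^ 2 * (4 * B ^ 2 - A ^ 2)) :
    Real.pi * (n : ℝ) / (2 * R) = (1 / 2) * Real.sqrt (4 * B ^ 2 - A ^ 2) ∧
    a₁ ((Real.pi * (n : ℝ) / (2 * R) : ℝ) : ℂ) = 0 ∧
    deriv a₁ ((Real.pi * (n : ℝ) / (2 * R) : ℝ) : ℂ) ≠ 0 ∧
    a₁ (-((Real.pi * (n : ℝ) / (2 * R) : ℝ) : ℂ)) = 0 ∧
    deriv a₁ (-((Real.pi * (n : ℝ) / (2 * R) : ℝ) : ℂ)) ≠ 0 := by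
  set k₀ : ℝ := Real.pi * (n : ℝ) / (2 * R) with hk₀
  have hπ := Real.pi_pos
  have hn' : (0 : ℝ) < (n : ℝ) := by exact_mod_cast hn
  have hk₀pos : 0 < k₀ := by positivity
  have hRne : R ≠ 0 := hR.ne'
  have hk0sq : k₀ ^ 2 = (4 * B ^ 2 - A ^ 2) / 4 := by
    have h1 : k₀ ^ 2 * (4 * R ^ 2) = Real.pi ^ 2 * (n : ℝ) ^ 2 := by
      rw [hk₀]; field_simp; ring
    rw [hcond] at h1
    have hR2 : (0:ℝ) < R ^ 2 := by positivity
    nlinarith [h1]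
  have hsqrt : Real.pi * (n : ℝ) / (2 * R) = (1 / 2) * Real.sqrt (4 * B ^ 2 - A ^ 2) := by
    have h2 : 4 * B ^ 2 - A ^ 2 = (2 * k₀) ^ 2 := by nlinarith [hk0sq]
    rw [h2, Real.sqrt_sq (by linarith : (0:ℝ) ≤ 2 * k₀)]
    rw [hk₀]; ring
  have harg : 4 * k₀ * R = (n : ℝ) * (2 * Real.pi) := by
    rw [hk₀]; field_simp; ring
  have hargC : ((4 * k₀ * R : ℝ) : ℂ) = (n : ℂ) * (2 * (Real.pi : ℂ)) := by
    exact_mod_cast harg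
  have hexp1 : Complex.exp (4 * Complex.I * ((k₀ : ℝ) : ℂ) * (R : ℂ)) = 1 := by
    rw [show (4 * Complex.I * ((k₀ : ℝ) : ℂ) * (R : ℂ)) = ((n : ℤ) : ℂ) * (2 * (Real.pi : ℂ) * Complex.I) by
      push_cast at hargC ⊢; linear_combination Complex.I * hargC]
    exact Complex.exp_int_mul_two_pi_mul_I n
  have hexp2 : Complex.exp (4 * Complex.I * ((-k₀ : ℝ) : ℂ) * (R : ℂ)) = 1 := by
    rw [show (4 * Complex.I * ((-k₀ : ℝ) : ℂ) * (R : ℂ)) = ((-(n : ℤ)) : ℂ) * (2 * (Real.pi : ℂ) * Complex.I) by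
      push_cast at hargC ⊢; linear_combination (-Complex.I) * hargC]
    exact_mod_cast Complex.exp_int_mul_two_pi_mul_I (-(n : ℤ))
  have hxre : k₀ ^ 2 - B ^ 2 = -A ^ 2 / 4 := by linarith [hk0sq]
  have hx1 : ((k₀ : ℝ) : ℂ) ^ 2 - (B : ℂ) ^ 2 = -(A : ℂ) ^ 2 / 4 := by exact_mod_cast hxre
  have hx2 : ((-k₀ : ℝ) : ℂ) ^ 2 - (B : ℂ) ^ 2 = -(A : ℂ) ^ 2 / 4 := by
    push_cast at hx1 ⊢; linear_combination hx1
  obtain ⟨hz1, hd1⟩ := a1_key A B R k₀ hA hR a₁ ha₁ hexp1 hx1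
  obtain ⟨hz2, hd2⟩ := a1_key A B R (-k₀) hA hR a₁ ha₁ hexp2 hx2
  have hneg : ((-k₀ : ℝ) : ℂ) = -((k₀ : ℝ) : ℂ) := by push_cast; ring
  rw [hneg] at hz2 hd2
  exact ⟨hsqrt, hz1, hd1, hz2, hd2⟩
end

section
/- Let A > 0, B ∈ ℝ, R > 0, and let a₁(k) = 1 + A² e^{4ikR} / (4(k² − B²)) for complex k ≠ ±B. If there exists an integer n ≥ 0 such that π² (1/2 + n)² = R² (4B² + A²), then the two real points k = ±π(1+2n)/(4R), which equal ±(1/2)√(4B² + A²), are simple zeros of a₁. -/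
open Complex

/-- Auxiliary: at a real point `x` where `exp(4IxR) = -1` and `x² - B² = A²/4`,
the spectral function vanishes and has nonzero derivative. -/
lemma a1_aux (A B R : ℝ) (hA : A ≠ 0) (hR : R ≠ 0) (a₁ : ℂ → ℂ)
    (ha₁ : ∀ k : ℂ, a₁ k =
      1 + (A : ℂ) ^ 2 * Complex.exp (4 * Complex.I * k * (R : ℂ)) / (4 * (k ^ 2 - (B : ℂ) ^ 2)))
    (x : ℝ) (hE : Complex.exp (4 * Complex.I * (x : ℂ) * (R : ℂ)) = -1)
    (hx : (x : ℂ) ^ 2 - (B : ℂ) ^ 2 = (A : ℂ) ^ 2 / 4) :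
    a₁ (x : ℂ) = 0 ∧ deriv a₁ (x : ℂ) ≠ 0 := by
  have hA' : (A : ℂ) ≠ 0 := by exact_mod_cast hA
  have hne : (4 : ℂ) * ((x : ℂ) ^ 2 - (B : ℂ) ^ 2) ≠ 0 := by
    rw [hx]
    field_simp
    exact pow_ne_zero _ hA'
  constructor
  · rw [ha₁, hE, hx]
    field_simp
    ring
  · have hfun : a₁ = fun k : ℂ =>
        1 + (A : ℂ) ^ 2 * (Complex.exp (4 * Complex.I * k * (R : ℂ)) /
          (4 * (k ^ 2 - (B : ℂ) ^ 2))) := by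
      funext k; rw [ha₁]; ring
    have h1 : HasDerivAt (fun k : ℂ => 4 * Complex.I * k * (R : ℂ))
        (4 * Complex.I * (R : ℂ)) (x : ℂ) := by
      have := ((hasDerivAt_id (x : ℂ)).const_mul (4 * Complex.I)).mul_const (R : ℂ)
      simpa using this
    have h2 := h1.cexp
    have h3 : HasDerivAt (fun k : ℂ => 4 * (k ^ 2 - (B : ℂ) ^ 2)) (8 * (x : ℂ)) (x : ℂ) := by
      have := ((hasDerivAt_pow 2 (x : ℂ)).sub_const ((B : ℂ) ^ 2)).const_mul (4 : ℂ)
      exact this.congr_deriv (by ring)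
    have h4 := h2.div h3 hne
    have h5 := (h4.const_mul ((A : ℂ) ^ 2)).const_add 1
    have hderiv : deriv a₁ (x : ℂ) = (A : ℂ) ^ 2 *
        ((Complex.exp (4 * Complex.I * (x : ℂ) * (R : ℂ)) * (4 * Complex.I * (R : ℂ)) *
            (4 * ((x : ℂ) ^ 2 - (B : ℂ) ^ 2)) -
          Complex.exp (4 * Complex.I * (x : ℂ) * (R : ℂ)) * (8 * (x : ℂ))) /
          (4 * ((x : ℂ) ^ 2 - (B : ℂ) ^ 2)) ^ 2) := by
      rw [hfun]
      exact h5.deriv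
    have hval : deriv a₁ (x : ℂ) = ((8 * x / A ^ 2 : ℝ) : ℂ) - 4 * (R : ℝ) * Complex.I := by
      rw [hderiv, hE, hx]
      have hA2 : ((A : ℂ) ^ 2) ≠ 0 := pow_ne_zero _ hA'
      push_cast
      field_simp
      ring
    rw [hval]
    intro h
    have him := congrArg Complex.im h
    simp only [Complex.sub_im, Complex.ofReal_im, Complex.mul_im, Complex.mul_re,
      Complex.I_im, Complex.I_re, Complex.ofReal_re, Complex.zero_im] at him
    norm_num at him
    exact hR him

/-- For the pure step initial datum with shift `R`, if `π²(1/2 + n)² = R²(4B² + A²)` for some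
integer `n ≥ 0`, then `k = ±π(1+2n)/(4R) = ±(1/2)√(4B² + A²)` are simple real zeros of the
spectral function `a₁(k) = 1 + A²e^{4ikR}/(4(k² − B²))`. -/
theorem a1_real_zeros_case2 (A B R : ℝ) (hA : 0 < A) (hR : 0 < R)
    (a₁ : ℂ → ℂ)
    (ha₁ : ∀ k : ℂ, a₁ k =
      1 + (A : ℂ) ^ 2 * Complex.exp (4 * Complex.I * k * (R : ℂ)) / (4 * (k ^ 2 - (B : ℂ) ^ 2)))
    (n : ℕ)
    (hcond : Real.pi ^ 2 * (1 / 2 + (n : ℝ)) ^ 2 = R ^ 2 * (4 * B ^ 2 + A ^ 2)) :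
    Real.pi * (1 + 2 * (n : ℝ)) / (4 * R) = (1 / 2) * Real.sqrt (4 * B ^ 2 + A ^ 2) ∧
    a₁ ((Real.pi * (1 + 2 * (n : ℝ)) / (4 * R) : ℝ) : ℂ) = 0 ∧
    deriv a₁ ((Real.pi * (1 + 2 * (n : ℝ)) / (4 * R) : ℝ) : ℂ) ≠ 0 ∧
    a₁ (-((Real.pi * (1 + 2 * (n : ℝ)) / (4 * R) : ℝ) : ℂ)) = 0 ∧
    deriv a₁ (-((Real.pi * (1 + 2 * (n : ℝ)) / (4 * R) : ℝ) : ℂ)) ≠ 0 := by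
  have hR' : R ≠ 0 := ne_of_gt hR
  have hA' : A ≠ 0 := ne_of_gt hA
  set x : ℝ := Real.pi * (1 + 2 * (n : ℝ)) / (4 * R) with hxdef
  have hpi := Real.pi_pos
  have hxpos : 0 < x := by
    apply div_pos
    · positivity
    · linarith
  -- key real identities
  have hxr : x * (4 * R) = Real.pi * (1 + 2 * (n : ℝ)) := by
    rw [hxdef]; field_simp
  have hx2 : x ^ 2 = B ^ 2 + A ^ 2 / 4 := by
    rw [hxdef, div_pow, div_eq_iff (by positivity)]
    ring_nf
    nlinarith [hcond]
  -- first conjunct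
  have hsq : 4 * B ^ 2 + A ^ 2 = (2 * x) ^ 2 := by nlinarith [hx2]
  have hconj1 : x = (1 / 2) * Real.sqrt (4 * B ^ 2 + A ^ 2) := by
    rw [hsq, Real.sqrt_sq (by linarith)]
    ring
  -- complex identities
  have hxrC : (x : ℂ) * (4 * (R : ℂ)) = (Real.pi : ℂ) * (1 + 2 * (n : ℂ)) := by
    exact_mod_cast congrArg (fun t : ℝ => (t : ℂ)) hxr
  have hxC : (x : ℂ) ^ 2 - (B : ℂ) ^ 2 = (A : ℂ) ^ 2 / 4 := by
    have : ((x ^ 2 : ℝ) : ℂ) = ((B ^ 2 + A ^ 2 / 4 : ℝ) : ℂ) := by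
      exact_mod_cast congrArg (fun t : ℝ => (t : ℂ)) hx2
    push_cast at this
    linear_combination this
  have harg : (4 : ℂ) * Complex.I * (x : ℂ) * (R : ℂ) =
      (Real.pi : ℂ) * Complex.I + (n : ℂ) * (2 * (Real.pi : ℂ) * Complex.I) := by
    linear_combination Complex.I * hxrC
  have hexpn : Complex.exp ((n : ℂ) * (2 * (Real.pi : ℂ) * Complex.I)) = 1 := by
    have := Complex.exp_int_mul_two_pi_mul_I (n : ℤ)
    push_cast at this
    exact this
  have hEpos : Complex.exp (4 * Complex.I * (x : ℂ) * (R : ℂ)) = -1 := by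
    rw [harg, Complex.exp_add, Complex.exp_pi_mul_I, hexpn]
    ring
  have hEneg : Complex.exp (4 * Complex.I * ((-x : ℝ) : ℂ) * (R : ℂ)) = -1 := by
    have harg' : (4 : ℂ) * Complex.I * ((-x : ℝ) : ℂ) * (R : ℂ) =
        -((Real.pi : ℂ) * Complex.I + (n : ℂ) * (2 * (Real.pi : ℂ) * Complex.I)) := by
      push_cast
      linear_combination -Complex.I * hxrC
    rw [harg', Complex.exp_neg, Complex.exp_add, Complex.exp_pi_mul_I, hexpn]
    norm_num
  have hxCneg : ((-x : ℝ) : ℂ) ^ 2 - (B : ℂ) ^ 2 = (A : ℂ) ^ 2 / 4 := by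
    push_cast
    linear_combination hxC
  obtain ⟨hz1, hd1⟩ := a1_aux A B R hA' hR' a₁ ha₁ x hEpos hxC
  obtain ⟨hz2, hd2⟩ := a1_aux A B R hA' hR' a₁ ha₁ (-x) hEneg hxCneg
  have hneg : -((x : ℝ) : ℂ) = ((-x : ℝ) : ℂ) := by push_cast; ring
  rw [hneg]
  exact ⟨hconj1, hz1, hd1, hz2, hd2⟩
end

section
/- Let A > 0, B ∈ ℝ, R ≥ 0 with 4B² − A² < 0, and let a₁(k) = 1 + A² e^{4ikR} / (4(k² − B²)) for complex k ≠ ±B. Then the transcendental equation A² e^{−4kR} = 4(B² + k²) has a unique solution k₀ in (0, ∞); the point i k₀ is a simple zero of a₁; and for every k > 0 with k ≠ k₀ one has a₁(ik) ≠ 0 (i.e., i k₀ is the only zero of a₁ on the positive imaginary axis). -/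
/-- If `4B² − A² < 0`, then the equation `A²e^{−4kR} = 4(B² + k²)` has a unique solution
`k₀ ∈ (0,∞)`; the point `ik₀` is a simple zero of `a₁(k) = 1 + A²e^{4ikR}/(4(k² − B²))`;
and `ik₀` is the only zero of `a₁` on the positive imaginary axis. -/
theorem a1_imaginary_zero (A B R : ℝ) (hA : 0 < A) (hR : 0 ≤ R) (hAB : 4 * B ^ 2 - A ^ 2 < 0)
    (a₁ : ℂ → ℂ)
    (ha₁ : ∀ k : ℂ, a₁ k =
      1 + (A : ℂ) ^ 2 * Complex.exp (4 * Complex.I * k * (R : ℂ)) / (4 * (k ^ 2 - (B : ℂ) ^ 2))) :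
    ∃ k₀ : ℝ, 0 < k₀ ∧
      A ^ 2 * Real.exp (-4 * k₀ * R) = 4 * (B ^ 2 + k₀ ^ 2) ∧
      (∀ k : ℝ, 0 < k → A ^ 2 * Real.exp (-4 * k * R) = 4 * (B ^ 2 + k ^ 2) → k = k₀) ∧
      a₁ (Complex.I * (k₀ : ℂ)) = 0 ∧
      deriv a₁ (Complex.I * (k₀ : ℂ)) ≠ 0 ∧
      (∀ k : ℝ, 0 < k → k ≠ k₀ → a₁ (Complex.I * (k : ℂ)) ≠ 0) := by
  -- the real function whose zero we seek
  set f : ℝ → ℝ := fun k => A ^ 2 * Real.exp (-4 * k * R) - 4 * (B ^ 2 + k ^ 2) with hfdef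
  have hcont : Continuous f := by
    apply Continuous.sub
    · exact (continuous_const.mul ((continuous_const.mul continuous_id').mul
        continuous_const).rexp)
    · continuity
  have hanti : StrictAntiOn f (Set.Ici (0 : ℝ)) := by
    intro x hx y hy hxy
    have h1 : Real.exp (-4 * y * R) ≤ Real.exp (-4 * x * R) := by
      apply Real.exp_le_exp.2
      nlinarith [hxy.le]
    have h2 : A ^ 2 * Real.exp (-4 * y * R) ≤ A ^ 2 * Real.exp (-4 * x * R) := by
      nlinarith [sq_nonneg A]
    have hx0 : (0:ℝ) ≤ x := hx
    simp only [hfdef]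
    nlinarith
  have hf0 : 0 < f 0 := by
    simp only [hfdef]
    simp
    nlinarith
  have hfA : f A < 0 := by
    have hexp1 : Real.exp (-4 * A * R) ≤ 1 := by
      rw [Real.exp_le_one_iff]
      nlinarith
    simp only [hfdef]
    nlinarith [sq_nonneg A, sq_nonneg B]
  obtain ⟨k₀, hk₀mem, hfk₀⟩ := intermediate_value_Icc' hA.le hcont.continuousOn
    ⟨hfA.le, hf0.le⟩
  have hk₀pos : 0 < k₀ := by
    rcases lt_or_eq_of_le hk₀mem.1 with h | h
    · exact h
    · exfalso; rw [← h] at hfk₀; rw [hfk₀] at hf0; exact lt_irrefl _ hf0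
  have heq : A ^ 2 * Real.exp (-4 * k₀ * R) = 4 * (B ^ 2 + k₀ ^ 2) := by
    have := hfk₀
    simp only [hfdef] at this
    linarith
  have huniq : ∀ k : ℝ, 0 < k → A ^ 2 * Real.exp (-4 * k * R) = 4 * (B ^ 2 + k ^ 2) → k = k₀ := by
    intro k hk hkeq
    have hfk : f k = 0 := by simp only [hfdef]; linarith
    exact hanti.injOn hk.le hk₀pos.le (by rw [hfk, hfk₀])
  -- evaluation of a₁ on the positive imaginary axis
  have key : ∀ k : ℝ, 0 < k → a₁ (Complex.I * (k : ℂ)) =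
      (((1 : ℝ) - A ^ 2 * Real.exp (-4 * k * R) / (4 * (k ^ 2 + B ^ 2)) : ℝ) : ℂ) := by
    intro k hk
    rw [ha₁]
    have harg : (4 : ℂ) * Complex.I * (Complex.I * (k : ℂ)) * (R : ℂ) =
        ((-4 * k * R : ℝ) : ℂ) := by
      rw [show (4 : ℂ) * Complex.I * (Complex.I * (k : ℂ)) * (R : ℂ) =
        (Complex.I * Complex.I) * (4 * (k : ℂ) * (R : ℂ)) by ring, Complex.I_mul_I]
      push_cast
      ring
    have hexp : Complex.exp (4 * Complex.I * (Complex.I * (k : ℂ)) * (R : ℂ)) =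
        ((Real.exp (-4 * k * R) : ℝ) : ℂ) := by
      rw [harg]
      exact (Complex.ofReal_exp _).symm
    rw [hexp]
    have hsq : (Complex.I * (k : ℂ)) ^ 2 = -((k : ℂ) ^ 2) := by
      rw [show (Complex.I * (k : ℂ)) ^ 2 = (Complex.I * Complex.I) * (k : ℂ) ^ 2 by ring,
        Complex.I_mul_I]
      ring
    rw [hsq]
    have hne : ((k : ℂ) ^ 2 + (B : ℂ) ^ 2) ≠ 0 := by
      have : (0 : ℝ) < k ^ 2 + B ^ 2 := by positivity
      intro hcon
      have : ((k ^ 2 + B ^ 2 : ℝ) : ℂ) = 0 := by push_cast; exact_mod_cast hcon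
      rw [Complex.ofReal_eq_zero] at this
      linarith
    push_cast
    rw [show (4 : ℂ) * (-(k : ℂ) ^ 2 - (B : ℂ) ^ 2) = -(4 * ((k : ℂ) ^ 2 + (B : ℂ) ^ 2)) by ring,
      div_neg]
    ring
  have ha0 : a₁ (Complex.I * (k₀ : ℂ)) = 0 := by
    rw [key k₀ hk₀pos]
    rw [Complex.ofReal_eq_zero]
    have hden : (0:ℝ) < 4 * (k₀ ^ 2 + B ^ 2) := by positivity
    rw [heq]
    field_simp
    ring
  have hnzero : ∀ k : ℝ, 0 < k → k ≠ k₀ → a₁ (Complex.I * (k : ℂ)) ≠ 0 := by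
    intro k hk hkne hcon
    rw [key k hk, Complex.ofReal_eq_zero] at hcon
    have hden : (0:ℝ) < 4 * (k ^ 2 + B ^ 2) := by positivity
    have : A ^ 2 * Real.exp (-4 * k * R) = 4 * (B ^ 2 + k ^ 2) := by
      field_simp at hcon
      rw [show -4 * k * R = -(4 * k * R) by ring]
      linarith
    exact hkne (huniq k hk this)
  -- the derivative
  have hFa : a₁ = fun k : ℂ => 1 + (A : ℂ) ^ 2 * Complex.exp (4 * Complex.I * k * (R : ℂ)) /
      (4 * (k ^ 2 - (B : ℂ) ^ 2)) := funext ha₁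
  set z₀ : ℂ := Complex.I * (k₀ : ℂ) with hz₀
  set E : ℂ := Complex.exp (4 * Complex.I * z₀ * (R : ℂ)) with hE
  have hD : (4 : ℂ) * (z₀ ^ 2 - (B : ℂ) ^ 2) = (((-4) * (k₀ ^ 2 + B ^ 2) : ℝ) : ℂ) := by
    rw [hz₀, show (Complex.I * (k₀ : ℂ)) ^ 2 = (Complex.I * Complex.I) * (k₀ : ℂ) ^ 2 by ring,
      Complex.I_mul_I]
    push_cast
    ring
  have hDne : (4 : ℂ) * (z₀ ^ 2 - (B : ℂ) ^ 2) ≠ 0 := by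
    rw [hD, Complex.ofReal_ne_zero]
    nlinarith
  have hlin : HasDerivAt (fun z : ℂ => 4 * Complex.I * z * (R : ℂ))
      (4 * Complex.I * (R : ℂ)) z₀ := by
    simpa using ((hasDerivAt_id z₀).const_mul (4 * Complex.I)).mul_const (R : ℂ)
  have hexp : HasDerivAt (fun z : ℂ => Complex.exp (4 * Complex.I * z * (R : ℂ)))
      (4 * Complex.I * (R : ℂ) * E) z₀ := by
    simpa [hE, mul_comm] using hlin.cexp
  have hnum : HasDerivAt (fun z : ℂ => (A : ℂ) ^ 2 * Complex.exp (4 * Complex.I * z * (R : ℂ)))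
      ((A : ℂ) ^ 2 * (4 * Complex.I * (R : ℂ) * E)) z₀ := hexp.const_mul _
  have hden : HasDerivAt (fun z : ℂ => 4 * (z ^ 2 - (B : ℂ) ^ 2)) (8 * z₀) z₀ := by
    have h := ((hasDerivAt_pow 2 z₀).sub_const ((B : ℂ) ^ 2)).const_mul (4 : ℂ)
    refine h.congr_deriv ?_
    norm_num
    ring
  have hder : HasDerivAt a₁
      (((A : ℂ) ^ 2 * (4 * Complex.I * (R : ℂ) * E) * (4 * (z₀ ^ 2 - (B : ℂ) ^ 2)) -
        (A : ℂ) ^ 2 * E * (8 * z₀)) / (4 * (z₀ ^ 2 - (B : ℂ) ^ 2)) ^ 2) z₀ := by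
    rw [hFa]
    exact ((hnum.div hden hDne).const_add 1)
  refine ⟨k₀, hk₀pos, heq, huniq, ha0, ?_, hnzero⟩
  rw [hder.deriv]
  apply div_ne_zero
  · have hfac : (A : ℂ) ^ 2 * (4 * Complex.I * (R : ℂ) * E) * (4 * (z₀ ^ 2 - (B : ℂ) ^ 2)) -
        (A : ℂ) ^ 2 * E * (8 * z₀) =
        (A : ℂ) ^ 2 * E * Complex.I * ((((-16) * R * (k₀ ^ 2 + B ^ 2) - 8 * k₀ : ℝ)) : ℂ) := by
      rw [hD, hz₀]
      push_cast
      ring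
    rw [hfac]
    apply mul_ne_zero
    apply mul_ne_zero
    apply mul_ne_zero
    · exact pow_ne_zero 2 (Complex.ofReal_ne_zero.2 hA.ne')
    · exact Complex.exp_ne_zero _
    · exact Complex.I_ne_zero
    · rw [Complex.ofReal_ne_zero]
      nlinarith
  · exact pow_ne_zero 2 hDne
end

section
/- Let A > 0, B ∈ ℝ, R ≥ 0 with 4B² − A² ≥ 0, and let a₁(k) = 1 + A² e^{4ikR} / (4(k² − B²)) for complex k ≠ ±B. Then a₁ has no purely imaginary zeros in the open upper half-plane: for every k > 0, a₁(ik) ≠ 0. -/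
/-- If `4B² − A² ≥ 0`, then `a₁(k) = 1 + A²e^{4ikR}/(4(k² − B²))` has no purely imaginary zeros
in the open upper half-plane. -/
theorem a1_no_imaginary_zeros (A B R : ℝ) (hA : 0 < A) (hR : 0 ≤ R)
    (hAB : 0 ≤ 4 * B ^ 2 - A ^ 2)
    (a₁ : ℂ → ℂ)
    (ha₁ : ∀ k : ℂ, a₁ k =
      1 + (A : ℂ) ^ 2 * Complex.exp (4 * Complex.I * k * (R : ℂ)) / (4 * (k ^ 2 - (B : ℂ) ^ 2))) :
    ∀ k : ℝ, 0 < k → a₁ (Complex.I * (k : ℂ)) ≠ 0 := by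
  intro k hk
  rw [ha₁]
  intro h
  have hden : (4 : ℂ) * ((Complex.I * (k : ℂ)) ^ 2 - (B : ℂ) ^ 2) ≠ 0 := by
    have : (4 : ℂ) * ((Complex.I * (k : ℂ)) ^ 2 - (B : ℂ) ^ 2)
        = -(((4 * (k ^ 2 + B ^ 2) : ℝ) : ℂ)) := by
      push_cast
      ring_nf
      simp [Complex.I_sq]
    rw [this]
    simp only [neg_ne_zero, Ne, Complex.ofReal_eq_zero]
    positivity
  have harg : 4 * Complex.I * (Complex.I * (k : ℂ)) * (R : ℂ)
      = ((-(4 * k * R) : ℝ) : ℂ) := by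
    push_cast
    ring_nf
    simp [Complex.I_sq]
  have h2 : (A : ℂ) ^ 2 * Complex.exp (4 * Complex.I * (Complex.I * (k : ℂ)) * (R : ℂ))
      = -(4 * ((Complex.I * (k : ℂ)) ^ 2 - (B : ℂ) ^ 2)) := by
    have := h
    rw [add_comm, add_eq_zero_iff_eq_neg, div_eq_iff hden] at this
    linear_combination this
  rw [harg, ← Complex.ofReal_exp] at h2
  have h3 : ((A ^ 2 * Real.exp (-(4 * k * R)) : ℝ) : ℂ) = ((4 * (k ^ 2 + B ^ 2) : ℝ) : ℂ) := by
    push_cast at h2 ⊢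
    linear_combination h2 - 4 * (k : ℂ) ^ 2 * Complex.I_sq
  have h4 : A ^ 2 * Real.exp (-(4 * k * R)) = 4 * (k ^ 2 + B ^ 2) :=
    Complex.ofReal_injective h3
  have he : Real.exp (-(4 * k * R)) ≤ 1 := by
    rw [Real.exp_le_one_iff]
    nlinarith
  have hep : 0 < Real.exp (-(4 * k * R)) := Real.exp_pos _
  nlinarith [sq_nonneg A, sq_nonneg B, sq_nonneg k]
end

section
/- Let A > 0, B ∈ ℝ, R ≥ 0 with 4|B|R ≤ π and 0 ≤ R ≤ π/(2√(4B² + A²)), and let a₁(k) = 1 + A² e^{4ikR} / (4(k² − B²)) for complex k ≠ ±B. Then a₁ has no zeros k with Im k > 0 and Re k ≠ 0 (i.e., all zeros of a₁ in the open upper half-plane lie on the imaginary axis). -/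
/-!
Write `k = x + iy` with `y > 0`, `x ≠ 0`. A zero of `a₁` means `A² e^{4ikR} = -4(k² - B²)`.
Imaginary parts give `A² e^{-4Ry} sin(4Rx) = -8xy`, so `x sin(4Rx) < 0`, which forces `4R|x| > π`;
the bound on `R` then yields `4x² > 4B² + A²`. Taking moduli instead,
`A² ≥ A² e^{-4Ry} = 4|k - B||k + B| > 4|x² - B²| > A²`, a contradiction.
-/

open Complex

lemma Real.pi_lt_abs_of_mul_sin_neg {t : ℝ} (h : t * Real.sin t < 0) : Real.pi < |t| := by
  by_contra! hle
  rcases le_or_gt 0 t with ht | ht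
  · have := Real.sin_nonneg_of_nonneg_of_le_pi ht ((le_abs_self t).trans hle)
    nlinarith
  · have := Real.sin_nonpos_of_nonpos_of_neg_pi_le ht.le (neg_le_of_abs_le hle)
    nlinarith

lemma eq_neg_of_one_add_div_eq_zero {K : Type*} [DivisionRing K] {a b : K} (h : 1 + a / b = 0) :
    a = -b := by
  have hb : b ≠ 0 := by rintro rfl; simp at h
  rw [add_eq_zero_iff_neg_eq, eq_div_iff hb] at h
  rw [← h, neg_one_mul]

lemma Complex.abs_re_sq_sub_sq_lt_norm {k : ℂ} (hk : k.im ≠ 0) (b : ℝ) :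
    |k.re ^ 2 - b ^ 2| < ‖k ^ 2 - (b : ℂ) ^ 2‖ := by
  have hsub : |(k - b).re| < ‖k - b‖ := abs_re_lt_norm.mpr (by simpa using hk)
  have hadd : |(k + b).re| < ‖k + b‖ := abs_re_lt_norm.mpr (by simpa using hk)
  calc |k.re ^ 2 - b ^ 2| = |(k - b).re| * |(k + b).re| := by
        rw [← abs_mul]; simp only [sub_re, add_re, ofReal_re]; ring_nf
    _ < ‖k - b‖ * ‖k + b‖ := mul_lt_mul'' hsub hadd (abs_nonneg _) (abs_nonneg _)
    _ = ‖k ^ 2 - (b : ℂ) ^ 2‖ := by rw [← norm_mul]; ring_nf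

section

variable {A B R : ℝ} {k : ℂ}

lemma four_mul_I_mul_ofReal_eq : 4 * I * k * R = ((4 * R : ℝ) : ℂ) * (I * k) := by
  push_cast; ring

lemma re_four_mul_I_mul_ofReal : (4 * I * k * R).re = -(4 * R * k.im) := by
  rw [four_mul_I_mul_ofReal_eq, re_ofReal_mul, I_mul_re, mul_neg]

lemma im_four_mul_I_mul_ofReal : (4 * I * k * R).im = 4 * R * k.re := by
  rw [four_mul_I_mul_ofReal_eq, im_ofReal_mul, I_mul_im]

lemma im_eq_of_sq_mul_exp_eq
    (h : (A : ℂ) ^ 2 * exp (4 * I * k * R) = -(4 * (k ^ 2 - (B : ℂ) ^ 2))) :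
    A ^ 2 * Real.exp (-(4 * R * k.im)) * Real.sin (4 * R * k.re) = -(8 * k.re * k.im) := by
  have hrhs : (-(4 * (k ^ 2 - (B : ℂ) ^ 2))).im = -(8 * k.re * k.im) := by simp [sq]; ring
  have := congrArg Complex.im h
  rwa [← ofReal_pow, im_ofReal_mul, exp_im, re_four_mul_I_mul_ofReal, im_four_mul_I_mul_ofReal,
    hrhs, ← mul_assoc] at this

lemma norm_eq_of_sq_mul_exp_eq
    (h : (A : ℂ) ^ 2 * exp (4 * I * k * R) = -(4 * (k ^ 2 - (B : ℂ) ^ 2))) :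
    A ^ 2 * Real.exp (-(4 * R * k.im)) = 4 * ‖k ^ 2 - (B : ℂ) ^ 2‖ := by
  have := congrArg norm h
  rwa [norm_neg, norm_mul, norm_mul, norm_exp, re_four_mul_I_mul_ofReal, norm_pow, norm_real,
    Real.norm_eq_abs, sq_abs, RCLike.norm_ofNat] at this

end

theorem a1_no_offaxis_zeros_general (A B R : ℝ) (hA : 0 < A) (hR : 0 ≤ R)
    (hRle : R ≤ Real.pi / (2 * Real.sqrt (4 * B ^ 2 + A ^ 2)))
    (a₁ : ℂ → ℂ)
    (ha₁ : ∀ k : ℂ, a₁ k =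
      1 + (A : ℂ) ^ 2 * Complex.exp (4 * Complex.I * k * (R : ℂ)) / (4 * (k ^ 2 - (B : ℂ) ^ 2))) :
    ∀ k : ℂ, 0 < k.im → k.re ≠ 0 → a₁ k ≠ 0 := by
  intro k hy hx hk
  have key := eq_neg_of_one_add_div_eq_zero (ha₁ k ▸ hk)
  have hdecay : 0 < A ^ 2 * Real.exp (-(4 * R * k.im)) := by positivity
  have hsin : k.re * Real.sin (4 * R * k.re) < 0 := by
    refine neg_of_mul_neg_right ?_ hdecay.le
    have : 0 < k.re ^ 2 * k.im := by positivity
    linear_combination (k.re * im_eq_of_sq_mul_exp_eq key) + 8 * this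
  have hRpos : 0 < R := hR.lt_of_ne (by rintro rfl; simp at hsin)
  have hpi : Real.pi < 4 * R * |k.re| := by
    have := Real.pi_lt_abs_of_mul_sin_neg (t := 4 * R * k.re) (by nlinarith)
    rwa [abs_mul, abs_of_pos (by positivity : 0 < 4 * R)] at this
  have hwide : 4 * B ^ 2 + A ^ 2 < 4 * k.re ^ 2 := by
    have hsqrt : 2 * Real.sqrt (4 * B ^ 2 + A ^ 2) < 4 * |k.re| := by
      rw [le_div_iff₀ (by positivity)] at hRle
      exact lt_of_mul_lt_mul_left (hRle.trans_lt (by linarith)) hR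
    have := (Real.sqrt_lt' (by positivity : 0 < 2 * |k.re|)).mp (by linarith)
    rw [mul_pow, sq_abs] at this
    linarith
  have hdecay_le : A ^ 2 * Real.exp (-(4 * R * k.im)) ≤ A ^ 2 :=
    mul_le_of_le_one_right (by positivity) (Real.exp_le_one_iff.mpr (by nlinarith))
  have hnorm := abs_re_sq_sub_sq_lt_norm hy.ne' B
  linarith [norm_eq_of_sq_mul_exp_eq key, le_abs_self (k.re ^ 2 - B ^ 2)]

/-- If `4|B|R ≤ π` and `0 ≤ R ≤ π/(2√(4B² + A²))`, then
`a₁(k) = 1 + A²e^{4ikR}/(4(k² − B²))` has no zeros `k` with `Im k > 0` and `Re k ≠ 0`. -/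
theorem a1_no_offaxis_zeros (A B R : ℝ) (hA : 0 < A) (hR : 0 ≤ R)
    (hBR : 4 * |B| * R ≤ Real.pi)
    (hRle : R ≤ Real.pi / (2 * Real.sqrt (4 * B ^ 2 + A ^ 2)))
    (a₁ : ℂ → ℂ)
    (ha₁ : ∀ k : ℂ, a₁ k =
      1 + (A : ℂ) ^ 2 * Complex.exp (4 * Complex.I * k * (R : ℂ)) / (4 * (k ^ 2 - (B : ℂ) ^ 2))) :
    ∀ k : ℂ, 0 < k.im → k.re ≠ 0 → a₁ k ≠ 0 :=
  a1_no_offaxis_zeros_general A B R hA hR hRle a₁ ha₁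
end

section
/- Let A > 0, R > 0 and B ∈ ℝ with 16B²R² ≤ π². For real τ > 0 and y > 0, the system 4A²R² e^{−y} cos τ = 16B²R² − τ² + y² and 4A²R² e^{−y} sin τ = −2τy holds if and only if there exists an integer n ≥ 1 such that τ ∈ (2πn − π, 2πn), y = −τ cot τ + √(τ² cot² τ + τ² − 16B²R²), and y e^{y} = −2A²R² (sin τ)/τ. (In particular, for τ in such an interval, the quadratic equation y² + 2τy cot τ − τ² + 16B²R² = 0 has exactly one positive root, given by the displayed formula.) -/
/-!
Eliminating `4A²R²e^{−y}` between the two equations leaves, once `sin τ ≠ 0`, the quadratic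
`y² + 2τy cot τ − τ² + 16B²R² = 0`, while the second equation alone is `y e^y = −2A²R² sin τ / τ`.
Since `τ, y > 0`, the second equation forces `sin τ < 0`, i.e. `τ ∈ (2πn − π, 2πn)` with `n ≥ 1`.
There `τ > π`, so `16B²R² ≤ π²` makes the constant term `16B²R² − τ²` negative: the quadratic has
roots of opposite signs, and the positive one is `−τ cot τ + √(τ² cot² τ + τ² − 16B²R²)`.
-/

open Real Set

lemma abs_lt_sqrt_sq_add {b c : ℝ} (hc : 0 < c) : |b| < √(b ^ 2 + c) := by
  rw [← sqrt_sq_eq_abs]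
  exact sqrt_lt_sqrt (sq_nonneg b) (by linarith)

lemma neg_add_sqrt_sq_add_pos {b c : ℝ} (hc : 0 < c) : 0 < -b + √(b ^ 2 + c) := by
  linarith [le_abs_self b, abs_lt_sqrt_sq_add (b := b) hc]

lemma quadratic_eq_zero_iff_eq_neg_add_sqrt {b c y : ℝ} (hc : 0 < c) (hy : 0 < y) :
    y ^ 2 + 2 * b * y - c = 0 ↔ y = -b + √(b ^ 2 + c) := by
  have hs : √(b ^ 2 + c) ^ 2 = b ^ 2 + c := sq_sqrt (by positivity)
  have hother : 0 < y + b + √(b ^ 2 + c) := by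
    linarith [neg_abs_le b, abs_lt_sqrt_sq_add (b := b) hc]
  rw [show y ^ 2 + 2 * b * y - c = (y + b + √(b ^ 2 + c)) * (y - (-b + √(b ^ 2 + c))) by
      linear_combination hs, mul_eq_zero, sub_eq_zero, or_iff_right hother.ne']

lemma quadratic_cot_form_iff {τ t C y : ℝ} (hC : C < τ ^ 2) (hy : 0 < y) :
    y ^ 2 + 2 * τ * y * t - τ ^ 2 + C = 0 ↔ y = -τ * t + √(τ ^ 2 * t ^ 2 + τ ^ 2 - C) := by
  rw [show τ ^ 2 * t ^ 2 + τ ^ 2 - C = (τ * t) ^ 2 + (τ ^ 2 - C) by ring, neg_mul,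
    ← quadratic_eq_zero_iff_eq_neg_add_sqrt (sub_pos.2 hC) hy]
  constructor <;> intro h <;> linear_combination h

lemma existsUnique_pos_quadratic_cot_form {τ t C : ℝ} (hC : C < τ ^ 2) :
    ∃! y : ℝ, 0 < y ∧ y ^ 2 + 2 * τ * y * t - τ ^ 2 + C = 0 := by
  have hroot : 0 < -τ * t + √(τ ^ 2 * t ^ 2 + τ ^ 2 - C) := by
    rw [show τ ^ 2 * t ^ 2 + τ ^ 2 - C = (τ * t) ^ 2 + (τ ^ 2 - C) by ring, neg_mul]
    exact neg_add_sqrt_sq_add_pos (sub_pos.2 hC)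
  exact ⟨_, ⟨hroot, (quadratic_cot_form_iff hC hroot).2 rfl⟩,
    fun y ⟨hy, hq⟩ => (quadratic_cot_form_iff hC hy).1 hq⟩

lemma sin_neg_of_mem_Ioo {n : ℕ} {τ : ℝ} (h : τ ∈ Ioo (2 * π * n - π) (2 * π * n)) :
    sin τ < 0 := by
  rw [← sin_sub_nat_mul_two_pi τ n]
  exact sin_neg_of_neg_of_neg_pi_lt (by linarith [h.2]) (by linarith [h.1])

lemma exists_nat_mem_Ioo_of_sin_neg {τ : ℝ} (hτ : 0 < τ) (hs : sin τ < 0) :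
    ∃ n : ℕ, 1 ≤ n ∧ τ ∈ Ioo (2 * π * n - π) (2 * π * n) := by
  set m := ⌊τ / (2 * π)⌋₊
  have h2π : 0 < 2 * π := by positivity
  have hlo : 2 * π * m ≤ τ := by
    have := Nat.floor_le (div_nonneg hτ.le h2π.le)
    rwa [le_div_iff₀ h2π, mul_comm] at this
  have hhi : τ < 2 * π * (m + 1) := by
    have := Nat.lt_floor_add_one (τ / (2 * π))
    rwa [div_lt_iff₀ h2π, mul_comm] at this
  have hupper_half : 2 * π * m + π < τ := by
    by_contra! hle
    have := sin_nonneg_of_nonneg_of_le_pi (x := τ - m * (2 * π)) (by linarith) (by linarith)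
    rw [sin_sub_nat_mul_two_pi] at this
    linarith
  exact ⟨m + 1, by omega, by push_cast; constructor <;> linarith⟩

lemma sin_neg_iff_exists_nat_mem_Ioo {τ : ℝ} (hτ : 0 < τ) :
    sin τ < 0 ↔ ∃ n : ℕ, 1 ≤ n ∧ τ ∈ Ioo (2 * π * n - π) (2 * π * n) :=
  ⟨exists_nat_mem_Ioo_of_sin_neg hτ, fun ⟨_, _, h⟩ => sin_neg_of_mem_Ioo h⟩

lemma pi_lt_of_mem_Ioo {n : ℕ} (hn : 1 ≤ n) {τ : ℝ} (h : τ ∈ Ioo (2 * π * n - π) (2 * π * n)) :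
    π < τ := by
  have : (1 : ℝ) ≤ n := by exact_mod_cast hn
  nlinarith [h.1, pi_pos]

lemma quadratic_cot_form_mul_sin (τ y C : ℝ) (hs : sin τ ≠ 0) :
    (y ^ 2 + 2 * τ * y * cot τ - τ ^ 2 + C) * sin τ
      = (C - τ ^ 2 + y ^ 2) * sin τ + 2 * τ * y * cos τ := by
  rw [cot_eq_cos_div_sin]
  field_simp
  ring

lemma exp_cos_sin_system_iff {K C τ y : ℝ} (hK : 0 ≤ K) (hτ : 0 < τ) (hy : 0 < y) :
    (K * exp (-y) * cos τ = C - τ ^ 2 + y ^ 2 ∧ K * exp (-y) * sin τ = -2 * τ * y) ↔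
      sin τ < 0 ∧ y ^ 2 + 2 * τ * y * cot τ - τ ^ 2 + C = 0 ∧
        K * exp (-y) * sin τ = -2 * τ * y := by
  constructor
  · rintro ⟨hcos, hsin⟩
    have hneg : sin τ < 0 := by
      by_contra! h
      nlinarith [mul_nonneg (mul_nonneg hK (exp_pos (-y)).le) h, mul_pos hτ hy]
    refine ⟨hneg, ?_, hsin⟩
    apply (mul_eq_zero.1 _).resolve_right hneg.ne
    rw [quadratic_cot_form_mul_sin τ y C hneg.ne]
    linear_combination -(sin τ) * hcos + cos τ * hsin
  · rintro ⟨hneg, hq, hsin⟩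
    refine ⟨mul_right_cancel₀ hneg.ne ?_, hsin⟩
    have := quadratic_cot_form_mul_sin τ y C hneg.ne
    rw [hq, zero_mul] at this
    linear_combination cos τ * hsin + this

lemma mul_exp_neg_sin_eq_iff {A R τ y : ℝ} (hτ : τ ≠ 0) :
    4 * A ^ 2 * R ^ 2 * exp (-y) * sin τ = -2 * τ * y ↔
      y * exp y = -2 * A ^ 2 * R ^ 2 * sin τ / τ := by
  rw [eq_div_iff hτ, exp_neg]
  have := (exp_pos y).ne'
  field_simp
  constructor <;> intro h <;> linarith

theorem a1_zero_system_reduction_general (A B R : ℝ)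
    (hBR : 16 * B ^ 2 * R ^ 2 ≤ Real.pi ^ 2) :
    (∀ τ y : ℝ, 0 < τ → 0 < y →
      ((4 * A ^ 2 * R ^ 2 * Real.exp (-y) * Real.cos τ = 16 * B ^ 2 * R ^ 2 - τ ^ 2 + y ^ 2 ∧
        4 * A ^ 2 * R ^ 2 * Real.exp (-y) * Real.sin τ = -2 * τ * y)
        ↔ ∃ n : ℕ, 1 ≤ n ∧ τ ∈ Set.Ioo (2 * Real.pi * (n : ℝ) - Real.pi) (2 * Real.pi * (n : ℝ)) ∧
            y = -τ * Real.cot τ +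
              Real.sqrt (τ ^ 2 * (Real.cot τ) ^ 2 + τ ^ 2 - 16 * B ^ 2 * R ^ 2) ∧
            y * Real.exp y = -2 * A ^ 2 * R ^ 2 * Real.sin τ / τ)) ∧
    (∀ n : ℕ, 1 ≤ n →
      ∀ τ ∈ Set.Ioo (2 * Real.pi * (n : ℝ) - Real.pi) (2 * Real.pi * (n : ℝ)),
        (∃! y : ℝ, 0 < y ∧ y ^ 2 + 2 * τ * y * Real.cot τ - τ ^ 2 + 16 * B ^ 2 * R ^ 2 = 0) ∧
        (∀ y : ℝ, 0 < y → y ^ 2 + 2 * τ * y * Real.cot τ - τ ^ 2 + 16 * B ^ 2 * R ^ 2 = 0 →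
          y = -τ * Real.cot τ +
            Real.sqrt (τ ^ 2 * (Real.cot τ) ^ 2 + τ ^ 2 - 16 * B ^ 2 * R ^ 2))) := by
  have hC : ∀ n : ℕ, 1 ≤ n → ∀ τ ∈ Ioo (2 * π * n - π) (2 * π * n), 16 * B ^ 2 * R ^ 2 < τ ^ 2 :=
    fun n hn τ hτ => hBR.trans_lt (pow_lt_pow_left₀ (pi_lt_of_mem_Ioo hn hτ) pi_pos.le two_ne_zero)
  refine ⟨fun τ y hτ hy => ?_, fun n hn τ hτ =>
    ⟨existsUnique_pos_quadratic_cot_form (hC n hn τ hτ),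
      fun y hy => (quadratic_cot_form_iff (hC n hn τ hτ) hy).1⟩⟩
  rw [exp_cos_sin_system_iff (by positivity) hτ hy, sin_neg_iff_exists_nat_mem_Ioo hτ,
    mul_exp_neg_sin_eq_iff hτ.ne']
  constructor
  · rintro ⟨⟨n, hn, hmem⟩, hq, hexp⟩
    exact ⟨n, hn, hmem, (quadratic_cot_form_iff (hC n hn τ hmem) hy).1 hq, hexp⟩
  · rintro ⟨n, hn, hmem, hroot, hexp⟩
    exact ⟨⟨n, hn, hmem⟩, (quadratic_cot_form_iff (hC n hn τ hmem) hy).2 hroot, hexp⟩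

/-- For `τ, y > 0` with `16B²R² ≤ π²`, the transcendental system
`4A²R²e^{−y}cos τ = 16B²R² − τ² + y²`, `4A²R²e^{−y}sin τ = −2τy` holds if and only if there is
an integer `n ≥ 1` with `τ ∈ (2πn − π, 2πn)`,
`y = −τ cot τ + √(τ²cot²τ + τ² − 16B²R²)` and `y e^y = −2A²R² sin τ / τ`.  In particular, for
`τ` in such an interval the quadratic `y² + 2τy cot τ − τ² + 16B²R² = 0` has exactly one
positive root, given by the displayed formula. -/
theorem a1_zero_system_reduction (A B R : ℝ) (hA : 0 < A) (hR : 0 < R)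
    (hBR : 16 * B ^ 2 * R ^ 2 ≤ Real.pi ^ 2) :
    (∀ τ y : ℝ, 0 < τ → 0 < y →
      ((4 * A ^ 2 * R ^ 2 * Real.exp (-y) * Real.cos τ = 16 * B ^ 2 * R ^ 2 - τ ^ 2 + y ^ 2 ∧
        4 * A ^ 2 * R ^ 2 * Real.exp (-y) * Real.sin τ = -2 * τ * y)
        ↔ ∃ n : ℕ, 1 ≤ n ∧ τ ∈ Set.Ioo (2 * Real.pi * (n : ℝ) - Real.pi) (2 * Real.pi * (n : ℝ)) ∧
            y = -τ * Real.cot τ +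
              Real.sqrt (τ ^ 2 * (Real.cot τ) ^ 2 + τ ^ 2 - 16 * B ^ 2 * R ^ 2) ∧
            y * Real.exp y = -2 * A ^ 2 * R ^ 2 * Real.sin τ / τ)) ∧
    (∀ n : ℕ, 1 ≤ n →
      ∀ τ ∈ Set.Ioo (2 * Real.pi * (n : ℝ) - Real.pi) (2 * Real.pi * (n : ℝ)),
        (∃! y : ℝ, 0 < y ∧ y ^ 2 + 2 * τ * y * Real.cot τ - τ ^ 2 + 16 * B ^ 2 * R ^ 2 = 0) ∧
        (∀ y : ℝ, 0 < y → y ^ 2 + 2 * τ * y * Real.cot τ - τ ^ 2 + 16 * B ^ 2 * R ^ 2 = 0 →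
          y = -τ * Real.cot τ +
            Real.sqrt (τ ^ 2 * (Real.cot τ) ^ 2 + τ ^ 2 - 16 * B ^ 2 * R ^ 2))) :=
  a1_zero_system_reduction_general A B R hBR
end

section
/- Let c be a real number with 0 ≤ c ≤ π². For an integer n ≥ 1 define y(τ) = −τ cot τ + √(τ² cot² τ + τ² − c) for τ ∈ (2πn − π, 2πn). Then the derivative y′(τ) tends to (π²(2n−1)² − c)/(2π(2n−1)) as τ → 2πn − π from the right, and y′(τ) → +∞ as τ → 2πn from the left. -/
open Real Set Filter

set_option maxHeartbeats 1000000

lemma my_hasDerivAt_cot {x : ℝ} (h : Real.sin x ≠ 0) :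
    HasDerivAt Real.cot (-(1 / Real.sin x ^ 2)) x := by
  have h1 : HasDerivAt (fun y => Real.cos y / Real.sin y)
      ((-Real.sin x * Real.sin x - Real.cos x * Real.cos x) / Real.sin x ^ 2) x :=
    (Real.hasDerivAt_cos x).div (Real.hasDerivAt_sin x) h
  have h2 : Real.cot = fun y => Real.cos y / Real.sin y :=
    funext fun y => Real.cot_eq_cos_div_sin y
  rw [h2]
  convert h1 using 1
  have hp := Real.sin_sq_add_cos_sq x
  field_simp
  linarith

lemma key_hasDerivAt (c x : ℝ) (hc0 : 0 ≤ c) (hcx : c < x ^ 2) (hsneg : Real.sin x < 0) :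
    HasDerivAt (fun τ => -τ * Real.cot τ + Real.sqrt (τ ^ 2 * (Real.cot τ) ^ 2 + τ ^ 2 - c))
      ((x * (Real.sqrt (x ^ 2 - c * Real.sin x ^ 2) + x * Real.cos x)
        - Real.sin x * (Real.cos x * Real.sqrt (x ^ 2 - c * Real.sin x ^ 2) + x))
        / (Real.sin x ^ 2 * Real.sqrt (x ^ 2 - c * Real.sin x ^ 2))) x := by
  set s := Real.sin x with hsdef
  set co := Real.cos x with hcodef
  have hs : s ≠ 0 := ne_of_lt hsneg
  have hpy : s ^ 2 + co ^ 2 = 1 := Real.sin_sq_add_cos_sq x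
  have hs2 : 0 < s ^ 2 := by positivity
  have hD : 0 < x ^ 2 - c * s ^ 2 := by nlinarith [sq_nonneg s, sq_nonneg co]
  set r := Real.sqrt (x ^ 2 - c * s ^ 2) with hrdef
  have hr : 0 < r := Real.sqrt_pos.mpr hD
  have hr2 : r ^ 2 = x ^ 2 - c * s ^ 2 := Real.sq_sqrt hD.le
  have hw : 0 < x ^ 2 * (Real.cot x) ^ 2 + x ^ 2 - c := by
    have h0 : 0 ≤ x ^ 2 * (Real.cot x) ^ 2 := by positivity
    linarith
  have hS : Real.sqrt (x ^ 2 * (Real.cot x) ^ 2 + x ^ 2 - c) = -r / s := by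
    have h1 : x ^ 2 * (Real.cot x) ^ 2 + x ^ 2 - c = (-r / s) ^ 2 := by
      rw [Real.cot_eq_cos_div_sin, ← hsdef, ← hcodef]
      field_simp
      nlinarith [hr2]
    rw [h1, Real.sqrt_sq]
    exact div_nonneg_iff.mpr (Or.inr ⟨by linarith, hsneg.le⟩)
  have hcot : HasDerivAt Real.cot (-(1 / s ^ 2)) x := my_hasDerivAt_cot hs
  have hinner : HasDerivAt (fun τ => τ ^ 2 * (Real.cot τ) ^ 2 + τ ^ 2 - c)
      ((2 * x ^ 1) * (Real.cot x) ^ 2 + x ^ 2 * (2 * (Real.cot x) ^ 1 * (-(1 / s ^ 2)))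
        + 2 * x ^ 1) x := by
    have hp : HasDerivAt (fun τ : ℝ => τ ^ 2) ((2 : ℕ) * x ^ 1) x := hasDerivAt_pow 2 x
    have hq : HasDerivAt (fun τ => (Real.cot τ) ^ 2) (2 * (Real.cot x) ^ 1 * (-(1 / s ^ 2))) x :=
      hcot.pow 2
    have := (hp.mul hq).add hp
    have h2 := this.sub_const c
    exact h2.congr_deriv (by push_cast; ring)
  have hsqrt : HasDerivAt (fun τ => Real.sqrt (τ ^ 2 * (Real.cot τ) ^ 2 + τ ^ 2 - c))
      (1 / (2 * Real.sqrt (x ^ 2 * (Real.cot x) ^ 2 + x ^ 2 - c)) *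
        ((2 * x ^ 1) * (Real.cot x) ^ 2 + x ^ 2 * (2 * (Real.cot x) ^ 1 * (-(1 / s ^ 2)))
          + 2 * x ^ 1)) x :=
    (Real.hasDerivAt_sqrt (ne_of_gt hw)).comp x hinner
  have hlin : HasDerivAt (fun τ => -τ * Real.cot τ) (-1 * Real.cot x + -x * (-(1 / s ^ 2))) x :=
    ((hasDerivAt_id x).neg.mul hcot)
  have htot := hlin.add hsqrt
  refine htot.congr_deriv (Eq.symm ?_)
  rw [hS, Real.cot_eq_cos_div_sin, ← hsdef, ← hcodef]
  field_simp
  linear_combination (x * s) * hpy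

/-- sign facts for the denominators -/
lemma aux_signs (c x s co r : ℝ) (hc0 : 0 ≤ c) (hcx : c < x ^ 2) (hx1 : 1 < x)
    (hs2 : 0 < s ^ 2) (hpy : s ^ 2 + co ^ 2 = 1)
    (hr : 0 < r) (hr2 : r ^ 2 = x ^ 2 - c * s ^ 2) :
    0 < r - x * co ∧ co * r - x < 0 := by
  have hx0 : (0:ℝ) < x := by linarith
  have hrx : r ≤ x := by nlinarith
  have hco1 : co < 1 := by nlinarith [sq_nonneg (co - 1)]
  constructor
  · rcases le_or_gt co 0 with h | h
    · nlinarith [mul_nonneg hx0.le (neg_nonneg.mpr h)]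
    · nlinarith [mul_pos hx0 h]
  · rcases le_or_gt co 0 with h | h
    · nlinarith [mul_nonneg (neg_nonneg.mpr h) hr.le]
    · nlinarith [mul_lt_mul_of_pos_right hco1 hr]

/-- For `0 ≤ c ≤ π²` and an integer `n ≥ 1`, the derivative of
`y(τ) = −τ cot τ + √(τ²cot²τ + τ² − c)` on `(2πn − π, 2πn)` tends to
`(π²(2n−1)² − c)/(2π(2n−1))` as `τ → (2πn − π)⁺` and tends to `+∞` as `τ → 2πn⁻`. -/
theorem y_deriv_boundary_limits (c : ℝ) (hc0 : 0 ≤ c) (hcpi : c ≤ Real.pi ^ 2)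
    (n : ℕ) (hn : 1 ≤ n)
    (y : ℝ → ℝ)
    (hy : ∀ τ : ℝ, y τ = -τ * Real.cot τ +
      Real.sqrt (τ ^ 2 * (Real.cot τ) ^ 2 + τ ^ 2 - c)) :
    Filter.Tendsto (deriv y)
      (nhdsWithin (2 * Real.pi * (n : ℝ) - Real.pi)
        (Set.Ioo (2 * Real.pi * (n : ℝ) - Real.pi) (2 * Real.pi * (n : ℝ))))
      (nhds ((Real.pi ^ 2 * (2 * (n : ℝ) - 1) ^ 2 - c) / (2 * Real.pi * (2 * (n : ℝ) - 1)))) ∧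
    Filter.Tendsto (deriv y)
      (nhdsWithin (2 * Real.pi * (n : ℝ))
        (Set.Ioo (2 * Real.pi * (n : ℝ) - Real.pi) (2 * Real.pi * (n : ℝ))))
      Filter.atTop := by
  have hπ : (0:ℝ) < π := Real.pi_pos
  have hπ3 : (3:ℝ) < π := Real.pi_gt_three
  have hn1 : (1:ℝ) ≤ (n:ℝ) := by exact_mod_cast hn
  set p1 : ℝ := 2 * π * (n:ℝ) with hp1def
  set p0 : ℝ := p1 - π with hp0def
  have hp1v : p1 = 2 * π * (n:ℝ) := hp1def
  have hp0π : π ≤ p0 := by rw [hp0def, hp1v]; nlinarith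
  have hp01 : p0 < p1 := by rw [hp0def]; linarith
  set I : Set ℝ := Set.Ioo p0 p1 with hIdef
  set R : ℝ → ℝ := fun x => Real.sqrt (x ^ 2 - c * Real.sin x ^ 2) with hRdef
  set N1f : ℝ → ℝ := fun x =>
    (x * (R x + x * Real.cos x) - Real.sin x * (Real.cos x * R x + x))
      / (Real.sin x ^ 2 * R x) with hN1def
  set G1 : ℝ → ℝ := fun x =>
    (x * (x ^ 2 - c) / (R x - x * Real.cos x)
      + Real.sin x * (x ^ 2 + c * Real.cos x ^ 2) / (Real.cos x * R x - x)) / R x with hG1def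
  -- basic facts on I
  have hxI : ∀ x ∈ I, π < x ∧ Real.sin x < 0 ∧ c < x ^ 2 := by
    intro x hx
    obtain ⟨hx1, hx2⟩ := hx
    have hπx : π < x := lt_of_le_of_lt hp0π hx1
    have hsin : Real.sin x < 0 := by
      have e1 := Real.sin_add_int_mul_two_pi (x - 2 * π * (n:ℝ)) (n:ℤ)
      have e2 : (x - 2 * π * (n:ℝ)) + ((n:ℤ):ℝ) * (2 * π) = x := by push_cast; ring
      rw [e2] at e1
      rw [e1]
      apply Real.sin_neg_of_neg_of_neg_pi_lt
      · rw [hp1v] at hx2; linarith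
      · rw [hp0def, hp1v] at hx1; linarith
    exact ⟨hπx, hsin, by nlinarith⟩
  have hyfun : y = fun τ => -τ * Real.cot τ +
      Real.sqrt (τ ^ 2 * (Real.cot τ) ^ 2 + τ ^ 2 - c) := funext hy
  have key : ∀ x ∈ I, HasDerivAt y (N1f x) x := by
    intro x hx
    obtain ⟨hπx, hsin, hcx⟩ := hxI x hx
    rw [hyfun]
    exact key_hasDerivAt c x hc0 hcx hsin
  have hderiv : ∀ x ∈ I, deriv y x = N1f x := fun x hx => (key x hx).deriv
  -- pointwise facts used in both parts
  have hfacts : ∀ x ∈ I, 0 < R x ∧ (R x) ^ 2 = x ^ 2 - c * Real.sin x ^ 2 ∧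
      0 < R x - x * Real.cos x ∧ Real.cos x * R x - x < 0 := by
    intro x hx
    obtain ⟨hπx, hsin, hcx⟩ := hxI x hx
    have hx1 : (1:ℝ) < x := by linarith
    have hs2 : 0 < Real.sin x ^ 2 := by
      have := mul_pos (neg_pos.mpr hsin) (neg_pos.mpr hsin); nlinarith
    have hpy : Real.sin x ^ 2 + Real.cos x ^ 2 = 1 := Real.sin_sq_add_cos_sq x
    have hD : 0 < x ^ 2 - c * Real.sin x ^ 2 := by nlinarith
    have hr : 0 < R x := Real.sqrt_pos.mpr hD
    have hr2 : (R x) ^ 2 = x ^ 2 - c * Real.sin x ^ 2 := Real.sq_sqrt hD.le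
    obtain ⟨h3, h4⟩ := aux_signs c x (Real.sin x) (Real.cos x) (R x) hc0 hcx hx1 hs2 hpy hr hr2
    exact ⟨hr, hr2, h3, h4⟩
  have heq : ∀ x ∈ I, N1f x = G1 x := by
    intro x hx
    obtain ⟨hπx, hsin, hcx⟩ := hxI x hx
    obtain ⟨hr, hr2, h3, h4⟩ := hfacts x hx
    have hs : Real.sin x ≠ 0 := ne_of_lt hsin
    have hs2 : (0:ℝ) < Real.sin x ^ 2 := by
      have := mul_pos (neg_pos.mpr hsin) (neg_pos.mpr hsin); nlinarith
    have hpy : Real.sin x ^ 2 + Real.cos x ^ 2 = 1 := Real.sin_sq_add_cos_sq x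
    have h1 : x * (x ^ 2 - c) / (R x - x * Real.cos x)
        = x * (R x + x * Real.cos x) / Real.sin x ^ 2 := by
      rw [div_eq_div_iff (ne_of_gt h3) (ne_of_gt hs2)]
      linear_combination (-x) * hr2 + x ^ 3 * hpy
    have h2 : Real.sin x * (x ^ 2 + c * Real.cos x ^ 2) / (Real.cos x * R x - x)
        = (-(Real.cos x * R x + x)) / Real.sin x := by
      rw [div_eq_div_iff (ne_of_lt h4) hs]
      linear_combination (Real.cos x ^ 2) * hr2 + x ^ 2 * hpy
    simp only [hN1def, hG1def]
    rw [h1, h2]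
    field_simp
    ring
  constructor
  · -- limit at p0
    have hEv : deriv y =ᶠ[nhdsWithin p0 I] G1 :=
      eventually_nhdsWithin_of_forall (fun x hx => (hderiv x hx).trans (heq x hx))
    have hsin0 : Real.sin p0 = 0 := by
      have e1 := Real.sin_add_int_mul_two_pi (-π) (n:ℤ)
      have e2 : (-π) + ((n:ℤ):ℝ) * (2 * π) = p0 := by rw [hp0def, hp1v]; push_cast; ring
      rw [e2] at e1
      rw [e1]; simp
    have hcos0 : Real.cos p0 = -1 := by
      have e1 := Real.cos_add_int_mul_two_pi (-π) (n:ℤ)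
      have e2 : (-π) + ((n:ℤ):ℝ) * (2 * π) = p0 := by rw [hp0def, hp1v]; push_cast; ring
      rw [e2] at e1
      rw [e1]; simp
    have hp0pos : 0 < p0 := lt_of_lt_of_le hπ hp0π
    have hRp0 : R p0 = p0 := by
      simp only [hRdef, hsin0]
      norm_num
      exact Real.sqrt_sq hp0pos.le
    have hRcont : Continuous R := by
      apply Real.continuous_sqrt.comp
      continuity
    have hden1 : R p0 - p0 * Real.cos p0 ≠ 0 := by
      rw [hRp0, hcos0]; intro h; nlinarith
    have hden2 : Real.cos p0 * R p0 - p0 ≠ 0 := by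
      rw [hRp0, hcos0]; intro h; nlinarith
    have hden3 : R p0 ≠ 0 := by rw [hRp0]; exact ne_of_gt hp0pos
    have hcont : ContinuousAt G1 p0 := by
      apply ContinuousAt.div _ hRcont.continuousAt hden3
      apply ContinuousAt.add
      · exact ContinuousAt.div (by fun_prop) ((hRcont.continuousAt).sub (by fun_prop)) hden1
      · exact ContinuousAt.div (by fun_prop)
          (((Real.continuous_cos.continuousAt).mul hRcont.continuousAt).sub continuousAt_id) hden2
    have hval : G1 p0 = (π ^ 2 * (2 * (n:ℝ) - 1) ^ 2 - c) / (2 * π * (2 * (n:ℝ) - 1)) := by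
      simp only [hG1def, hsin0, hcos0, hRp0]
      have h2n1 : (0:ℝ) < 2 * (n:ℝ) - 1 := by linarith
      have hp0e : p0 = π * (2 * (n:ℝ) - 1) := by rw [hp0def, hp1v]; ring
      rw [hp0e]
      have hne : π * (2 * (n:ℝ) - 1) ≠ 0 := by positivity
      field_simp
      ring
    rw [← hval]
    exact (hcont.continuousWithinAt.tendsto).congr' hEv.symm
  · -- limit at p1
    have hsin1 : Real.sin p1 = 0 := by
      have e1 := Real.sin_add_int_mul_two_pi 0 (n:ℤ)
      have e2 : (0:ℝ) + ((n:ℤ):ℝ) * (2 * π) = p1 := by rw [hp1v]; push_cast; ring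
      rw [e2] at e1
      rw [e1]; simp
    have hbnd : ∀ᶠ x in nhdsWithin p1 I, (Real.sin x ^ 2)⁻¹ ≤ deriv y x := by
      have hmem : Set.Ioo (p1 - π/2) (p1 + 1) ∈ nhds p1 :=
        Ioo_mem_nhds (by linarith) (by linarith)
      filter_upwards [self_mem_nhdsWithin, mem_nhdsWithin_of_mem_nhds hmem] with x hxmem hxJ
      obtain ⟨hπx, hsin, hcx⟩ := hxI x hxmem
      obtain ⟨hr, hr2, h3, h4⟩ := hfacts x hxmem
      have hx1 : 1 < x := by linarith
      have hcos : 0 < Real.cos x := by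
        have e1 := Real.cos_add_int_mul_two_pi (x - 2 * π * (n:ℝ)) (n:ℤ)
        have e2 : (x - 2 * π * (n:ℝ)) + ((n:ℤ):ℝ) * (2 * π) = x := by push_cast; ring
        rw [e2] at e1
        rw [e1]
        apply Real.cos_pos_of_mem_Ioo
        constructor
        · have h5 := hxJ.1; rw [hp1v] at h5; linarith
        · have h6 := hxmem.2; rw [hp1v] at h6; linarith
      rw [hderiv x hxmem]
      have hs2 : (0:ℝ) < Real.sin x ^ 2 := by
        have := mul_pos (neg_pos.mpr hsin) (neg_pos.mpr hsin); nlinarith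
      have hNum : R x ≤ x * (R x + x * Real.cos x) - Real.sin x * (Real.cos x * R x + x) := by
        nlinarith [mul_nonneg (mul_nonneg (by linarith : (0:ℝ) ≤ x) (by linarith : (0:ℝ) ≤ x)) hcos.le,
          mul_nonneg (mul_nonneg (by linarith : (0:ℝ) ≤ -Real.sin x) hcos.le) hr.le,
          mul_nonneg (by linarith : (0:ℝ) ≤ -Real.sin x) (by linarith : (0:ℝ) ≤ x),
          mul_nonneg (by linarith : (0:ℝ) ≤ x - 1) hr.le]
      simp only [hN1def]
      rw [inv_eq_one_div, div_le_div_iff₀ hs2 (by positivity)]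
      nlinarith [mul_le_mul_of_nonneg_right hNum hs2.le]
    have htend : Tendsto (fun x => Real.sin x ^ 2) (nhdsWithin p1 I) (nhdsWithin 0 (Set.Ioi 0)) := by
      rw [tendsto_nhdsWithin_iff]
      constructor
      · have h7 : Tendsto (fun x => Real.sin x ^ 2) (nhds p1) (nhds (Real.sin p1 ^ 2)) :=
          ((Real.continuous_sin.pow 2).continuousAt)
        rw [hsin1] at h7
        simpa using h7.mono_left nhdsWithin_le_nhds
      · filter_upwards [self_mem_nhdsWithin] with x hx
        have hsin := (hxI x hx).2.1
        have h8 : 0 < Real.sin x ^ 2 := by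
          have := mul_pos (neg_pos.mpr hsin) (neg_pos.mpr hsin); nlinarith
        exact h8
    have hinv : Tendsto (fun x => (Real.sin x ^ 2)⁻¹) (nhdsWithin p1 I) atTop :=
      tendsto_inv_nhdsGT_zero.comp htend
    exact tendsto_atTop_mono' _ hbnd hinv
end

section
/- For each integer n ≥ 1, let τₙ* be the unique solution of tan τ = τ in (2πn − π, 2πn − π/2). Then the function h(τ) = −(sin τ)/τ is concave on the interval (2πn − π, τₙ*). -/
open Real Set

private lemma hd1 {x : ℝ} (hx : x ≠ 0) :
    HasDerivAt (fun τ : ℝ => -Real.sin τ / τ)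
      ((Real.sin x - x * Real.cos x) / x ^ 2) x := by
  have h := ((Real.hasDerivAt_sin x).neg.div (hasDerivAt_id x) hx)
  convert h using 1
  · rfl
  · rfl
  · rfl
  simp only [id, Pi.neg_apply]
  field_simp
  ring

private lemma hd2 {x : ℝ} (hx : x ≠ 0) :
    HasDerivAt (fun τ : ℝ => (Real.sin τ - τ * Real.cos τ) / τ ^ 2)
      (((x ^ 2 - 2) * Real.sin x + 2 * x * Real.cos x) / x ^ 3) x := by
  have hnum : HasDerivAt (fun τ : ℝ => Real.sin τ - τ * Real.cos τ)
      (x * Real.sin x) x := by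
    have h := (Real.hasDerivAt_sin x).sub
      ((hasDerivAt_id x).mul (Real.hasDerivAt_cos x))
    convert h using 1
    · rfl
    · rfl
    · rfl
    simp only [id]
    ring
  have hden : HasDerivAt (fun τ : ℝ => τ ^ 2) (2 * x) x := by
    simpa using (hasDerivAt_pow 2 x)
  have hx2 : x ^ 2 ≠ 0 := pow_ne_zero _ hx
  have h := hnum.div hden hx2
  convert h using 1
  · rfl
  · rfl
  · rfl
  field_simp
  ring

private lemma deriv_eq_on {x : ℝ} (hx : x ≠ 0) :
    deriv (fun τ : ℝ => -Real.sin τ / τ) x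
      = (Real.sin x - x * Real.cos x) / x ^ 2 := (hd1 hx).deriv

/-- For each integer `n ≥ 1`, if `τₙ*` is the solution of `tan τ = τ` in
`(2πn − π, 2πn − π/2)`, then `h(τ) = −(sin τ)/τ` is concave on `(2πn − π, τₙ*)`. -/
theorem h_concave_before_max (n : ℕ) (hn : 1 ≤ n) (τs : ℝ)
    (hτs : τs ∈ Set.Ioo (2 * Real.pi * (n : ℝ) - Real.pi) (2 * Real.pi * (n : ℝ) - Real.pi / 2))
    (htan : Real.tan τs = τs) :
    ConcaveOn ℝ (Set.Ioo (2 * Real.pi * (n : ℝ) - Real.pi) τs)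
      (fun τ : ℝ => -Real.sin τ / τ) := by
  have hπ := Real.pi_pos
  have hn1 : (1 : ℝ) ≤ (n : ℝ) := by exact_mod_cast hn
  set a : ℝ := 2 * Real.pi * (n : ℝ) - Real.pi with ha
  have haπ : Real.pi ≤ a := by
    have : 2 * Real.pi * 1 ≤ 2 * Real.pi * (n : ℝ) := by nlinarith
    simp only [ha]; linarith
  have hpos : ∀ x ∈ Set.Ioo a τs, (0 : ℝ) < x := fun x hx => lt_of_lt_of_le
    (lt_of_lt_of_le hπ haπ) (le_of_lt hx.1)
  -- sign information on the interval
  have hsin : ∀ x ∈ Set.Ioo a τs, Real.sin x < 0 := by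
    intro x hx
    have hx2 : x < 2 * Real.pi * (n : ℝ) - Real.pi / 2 := lt_of_lt_of_le hx.2 hτs.2.le
    have key : Real.sin x = Real.sin (x - (n : ℝ) * (2 * Real.pi)) := by
      rw [Real.sin_sub_nat_mul_two_pi]
    rw [key]
    apply Real.sin_neg_of_neg_of_neg_pi_lt
    · nlinarith [hx.1, hx2]
    · nlinarith [hx.1]
  have hcos : ∀ x ∈ Set.Ioo a τs, Real.cos x < 0 := by
    intro x hx
    have hx2 : x < 2 * Real.pi * (n : ℝ) - Real.pi / 2 := lt_of_lt_of_le hx.2 hτs.2.le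
    have key : Real.cos x = Real.cos ((n : ℝ) * (2 * Real.pi) - x) :=
      (Real.cos_nat_mul_two_pi_sub x n).symm
    rw [key]
    apply Real.cos_neg_of_pi_div_two_lt_of_lt
    · nlinarith [hx.1, hx2]
    · nlinarith [hx.1]
  refine concaveOn_of_deriv2_nonpos (convex_Ioo _ _) ?_ ?_ ?_ ?_
  · -- continuity
    apply ContinuousOn.div
    · exact (Real.continuous_sin.neg).continuousOn
    · exact continuousOn_id
    · intro x hx; exact (hpos x hx).ne'
  · -- differentiability of f
    rw [interior_Ioo]
    intro x hx
    exact ((hd1 (hpos x hx).ne').differentiableAt).differentiableWithinAt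
  · -- differentiability of deriv f
    rw [interior_Ioo]
    intro x hx
    have hx0 : x ≠ 0 := (hpos x hx).ne'
    have heq : deriv (fun τ : ℝ => -Real.sin τ / τ)
        =ᶠ[nhds x] (fun τ : ℝ => (Real.sin τ - τ * Real.cos τ) / τ ^ 2) := by
      filter_upwards [isOpen_ne.mem_nhds hx0] with y hy using deriv_eq_on hy
    exact (((hd2 hx0).differentiableAt).congr_of_eventuallyEq heq).differentiableWithinAt
  · -- second derivative nonpositive
    rw [interior_Ioo]
    intro x hx
    have hx0 : (0 : ℝ) < x := hpos x hx
    have heq : deriv (fun τ : ℝ => -Real.sin τ / τ)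
        =ᶠ[nhds x] (fun τ : ℝ => (Real.sin τ - τ * Real.cos τ) / τ ^ 2) := by
      filter_upwards [isOpen_ne.mem_nhds hx0.ne'] with y hy using deriv_eq_on hy
    have h2 : deriv^[2] (fun τ : ℝ => -Real.sin τ / τ) x
        = ((x ^ 2 - 2) * Real.sin x + 2 * x * Real.cos x) / x ^ 3 := by
      simp only [Function.iterate_succ, Function.iterate_zero, Function.comp_apply, id]
      rw [heq.deriv_eq]
      exact (hd2 hx0.ne').deriv
    rw [h2]
    have hs := hsin x hx
    have hc := hcos x hx
    have hxpi : Real.pi ≤ x := le_trans haπ hx.1.le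
    have hx2 : (2 : ℝ) < x ^ 2 := by nlinarith [Real.pi_gt_three]
    apply div_nonpos_of_nonpos_of_nonneg
    · nlinarith
    · positivity
end

section
/- Let A > 0, R > 0 and B ∈ ℝ with 16B²R² ≤ π². For an integer n ≥ 1 define y(τ) = −τ cot τ + √(τ² cot² τ + τ² − 16B²R²) for τ ∈ (2πn − π, 2πn), and consider the equation y(τ) e^{y(τ)} = −2A²R² (sin τ)/τ on this interval. If 4A²R² ≤ π²(2n−1)² − 16B²R², then this equation has no solution τ in (2πn − π, 2πn); if 4A²R² > π²(2n−1)² − 16B²R², then it has exactly one solution τ in (2πn − π, 2πn). -/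
open Real Set Filter

noncomputable def yfAux (c t : ℝ) : ℝ :=
  -t * (Real.cos t / Real.sin t) +
    Real.sqrt (t ^ 2 * (Real.cos t / Real.sin t) ^ 2 + t ^ 2 - c)

noncomputable def phiAux (c t : ℝ) : ℝ :=
  yfAux c t * Real.exp (yfAux c t) * t / (-Real.sin t)

lemma radAux_pos {c t : ℝ} (hcpi : c ≤ Real.pi ^ 2) (hπ : Real.pi < t) :
    0 < t ^ 2 * (Real.cos t / Real.sin t) ^ 2 + t ^ 2 - c := by
  have h1 : Real.pi ^ 2 < t ^ 2 := by nlinarith [Real.pi_pos]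
  have h2 : 0 ≤ t ^ 2 * (Real.cos t / Real.sin t) ^ 2 := by positivity

  nlinarith

lemma yfAux_pos {c t : ℝ} (hcpi : c ≤ Real.pi ^ 2) (hπ : Real.pi < t) :
    0 < yfAux c t := by
  have hrad := radAux_pos hcpi hπ
  have hD : 0 < Real.sqrt (t ^ 2 * (Real.cos t / Real.sin t) ^ 2 + t ^ 2 - c) :=
    Real.sqrt_pos.mpr hrad
  have hD2 := Real.sq_sqrt hrad.le
  have h1 : Real.pi ^ 2 < t ^ 2 := by nlinarith [Real.pi_pos]
  unfold yfAux
  nlinarith [hD2, hD, h1]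

set_option maxHeartbeats 1000000 in
lemma deriv_pos_aux {c t : ℝ} (hcpi : c ≤ Real.pi ^ 2) (hπ : Real.pi < t)
    (hS : Real.sin t < 0) :
    ∃ v : ℝ, 0 < v ∧ HasDerivAt (phiAux c) v t := by
  have hS0 : Real.sin t ≠ 0 := ne_of_lt hS
  have hrad := radAux_pos hcpi hπ
  have hq : HasDerivAt (fun x => Real.cos x / Real.sin x)
      ((-Real.sin t * Real.sin t - Real.cos t * Real.cos t) / Real.sin t ^ 2) t :=
    (Real.hasDerivAt_cos t).div (Real.hasDerivAt_sin t) hS0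
  have hu1 : HasDerivAt (fun x => -x * (Real.cos x / Real.sin x))
      (-1 * (Real.cos t / Real.sin t) +
        -t * ((-Real.sin t * Real.sin t - Real.cos t * Real.cos t) / Real.sin t ^ 2)) t :=
    ((hasDerivAt_id t).neg).mul hq
  have hp2 : HasDerivAt (fun x : ℝ => x ^ 2) (2 * t) t := by
    simpa using hasDerivAt_pow 2 t
  have hq2 : HasDerivAt (fun x => (Real.cos x / Real.sin x) ^ 2)
      (2 * (Real.cos t / Real.sin t) *
        ((-Real.sin t * Real.sin t - Real.cos t * Real.cos t) / Real.sin t ^ 2)) t := by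
    simpa using hq.fun_pow 2
  have hradD : HasDerivAt (fun x => x ^ 2 * (Real.cos x / Real.sin x) ^ 2 + x ^ 2 - c)
      ((2 * t * (Real.cos t / Real.sin t) ^ 2 +
        t ^ 2 * (2 * (Real.cos t / Real.sin t) *
          ((-Real.sin t * Real.sin t - Real.cos t * Real.cos t) / Real.sin t ^ 2))) + 2 * t) t :=
    ((hp2.mul hq2).add hp2).sub_const c
  have hsq : HasDerivAt
      (fun x => Real.sqrt (x ^ 2 * (Real.cos x / Real.sin x) ^ 2 + x ^ 2 - c))
      (((2 * t * (Real.cos t / Real.sin t) ^ 2 +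
        t ^ 2 * (2 * (Real.cos t / Real.sin t) *
          ((-Real.sin t * Real.sin t - Real.cos t * Real.cos t) / Real.sin t ^ 2))) + 2 * t) /
        (2 * Real.sqrt (t ^ 2 * (Real.cos t / Real.sin t) ^ 2 + t ^ 2 - c))) t :=
    hradD.sqrt (ne_of_gt hrad)
  have hyd : HasDerivAt (yfAux c) (
      (-1 * (Real.cos t / Real.sin t) +
        -t * ((-Real.sin t * Real.sin t - Real.cos t * Real.cos t) / Real.sin t ^ 2)) +
      ((2 * t * (Real.cos t / Real.sin t) ^ 2 +
        t ^ 2 * (2 * (Real.cos t / Real.sin t) *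
          ((-Real.sin t * Real.sin t - Real.cos t * Real.cos t) / Real.sin t ^ 2))) + 2 * t) /
        (2 * Real.sqrt (t ^ 2 * (Real.cos t / Real.sin t) ^ 2 + t ^ 2 - c))) t := by
    have := hu1.add hsq
    exact this
  clear hu1 hp2 hq2 hradD hsq hq
  set S := Real.sin t with hSdef
  set C := Real.cos t with hCdef
  set D := Real.sqrt (t ^ 2 * (C / S) ^ 2 + t ^ 2 - c) with hDdef
  set w := (-1 * (C / S) + -t * ((-S * S - C * C) / S ^ 2)) +
      ((2 * t * (C / S) ^ 2 + t ^ 2 * (2 * (C / S) * ((-S * S - C * C) / S ^ 2))) + 2 * t) /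
        (2 * D) with hwdef
  set y0 := yfAux c t with hy0def
  have hy0eq : y0 = -t * (C / S) + D := rfl
  have hexp : HasDerivAt (fun x => Real.exp (yfAux c x)) (Real.exp y0 * w) t := hyd.exp
  have hnum : HasDerivAt (fun x => yfAux c x * Real.exp (yfAux c x) * x)
      ((w * Real.exp y0 + y0 * (Real.exp y0 * w)) * t + y0 * Real.exp y0 * 1) t :=
    (hyd.mul hexp).mul (hasDerivAt_id t)
  have hden : HasDerivAt (fun x => -Real.sin x) (-C) t := (Real.hasDerivAt_sin t).neg
  have hSneg : S < 0 := hS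
  have hnS : -S ≠ 0 := by intro h; apply hS0; linarith [neg_eq_zero.mp h]
  have hphi : HasDerivAt (phiAux c)
      ((((w * Real.exp y0 + y0 * (Real.exp y0 * w)) * t + y0 * Real.exp y0 * 1) * (-S) -
        (y0 * Real.exp y0 * t) * (-C)) / (-S) ^ 2) t := hnum.div hden hnS
  have hS2 : 0 < S ^ 2 := by nlinarith
  have hDpos : 0 < D := by rw [hDdef]; exact Real.sqrt_pos.mpr hrad
  have hy0pos : 0 < y0 := by rw [hy0def]; exact yfAux_pos hcpi hπ
  have hpy : S ^ 2 + C ^ 2 = 1 := Real.sin_sq_add_cos_sq t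
  refine ⟨_, ?_, hphi⟩
  clear_value S C D w y0
  clear hphi hnum hexp hden hyd hrad hy0def hSdef hCdef hDdef
  have hSD : S * D = S * y0 + t * C := by rw [hy0eq]; field_simp; ring
  have hw : w * (2 * D * S ^ 3) = -2 * D * S ^ 2 * C + 2 * t * D * S * (S ^ 2 + C ^ 2) +
      2 * t * S * C ^ 2 - 2 * t ^ 2 * C * (S ^ 2 + C ^ 2) + 2 * t * S ^ 3 := by
    rw [hwdef]; field_simp; ring
  set G := (w * (1 + y0) * t + y0) * (-S) + y0 * t * C with hGdef
  clear_value G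
  have hGK : G * (2 * S ^ 2 * D) = -2 * S * (t ^ 2 * S ^ 2 + t ^ 2 * y0 ^ 2
      - 2 * t * S * C * y0 ^ 2 + 2 * t ^ 2 * y0 * S ^ 2 + S ^ 2 * y0 ^ 2) := by
    have h3 : G * (2 * S ^ 2 * D) = -((1 + y0) * t) * (w * (2 * D * S ^ 3))
        - 2 * y0 * S ^ 3 * D + 2 * y0 * t * C * S ^ 2 * D := by rw [hGdef]; ring
    rw [h3, hw]
    linear_combination (-2 * S * t ^ 2 * y0 ^ 2) * hpy +
      (-((1 + y0) * t) * (2 * t * (S ^ 2 + C ^ 2) - 2 * S * C) + 2 * y0 * S * (t * C - S)) * hSD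
  have ht3 : 3 < t := lt_trans Real.pi_gt_three hπ
  have ht0 : (0:ℝ) < t := by linarith
  have h2sc : 2 * (S * C) ≤ 1 := by nlinarith [sq_nonneg (S - C)]
  have hKpos : 0 < t ^ 2 * S ^ 2 + t ^ 2 * y0 ^ 2 - 2 * t * S * C * y0 ^ 2
      + 2 * t ^ 2 * y0 * S ^ 2 + S ^ 2 * y0 ^ 2 := by
    nlinarith [mul_nonneg (mul_nonneg ht0.le (sq_nonneg y0)) (by linarith : (0:ℝ) ≤ 1 - 2 * (S * C)),
      mul_pos (mul_pos ht0 ht0) hS2,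
      mul_nonneg (sq_nonneg y0) (mul_nonneg ht0.le (by linarith : (0:ℝ) ≤ t - 1)),
      mul_nonneg (mul_nonneg (by positivity : (0:ℝ) ≤ 2 * t ^ 2) hy0pos.le) hS2.le,
      mul_nonneg hS2.le (sq_nonneg y0)]
  have h1 : 0 < G * (2 * S ^ 2 * D) := by
    rw [hGK]
    exact mul_pos (show (0:ℝ) < -2 * S by linarith) hKpos
  have hP : 0 < 2 * S ^ 2 * D := mul_pos (by nlinarith [hS2]) hDpos
  have hGpos : 0 < G := by
    by_contra hle
    push_neg at hle
    nlinarith [mul_nonpos_of_nonpos_of_nonneg hle hP.le]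
  have hVG : (((w * Real.exp y0 + y0 * (Real.exp y0 * w)) * t + y0 * Real.exp y0 * 1) * (-S) -
      (y0 * Real.exp y0 * t) * (-C)) / (-S) ^ 2 = Real.exp y0 * G / S ^ 2 := by
    rw [hGdef]; field_simp; ring
  rw [hVG]
  exact div_pos (mul_pos (Real.exp_pos _) hGpos) hS2

lemma interval_facts (n : ℕ) (hn : 1 ≤ n) {τ : ℝ}
    (hτ : τ ∈ Set.Ioo (2 * Real.pi * (n : ℝ) - Real.pi) (2 * Real.pi * (n : ℝ))) :
    Real.pi < τ ∧ Real.sin τ < 0 := by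
  have hπ := Real.pi_pos
  have hn' : (1 : ℝ) ≤ (n : ℝ) := by exact_mod_cast hn
  have h1 : Real.pi ≤ 2 * Real.pi * (n : ℝ) - Real.pi := by nlinarith
  obtain ⟨hτ1, hτ2⟩ := hτ
  constructor
  · linarith
  · have hper := Real.sin_add_int_mul_two_pi (τ - 2 * Real.pi * n) n
    rw [show τ - 2 * Real.pi * n + (n : ℤ) * (2 * Real.pi) = τ by push_cast; ring] at hper
    rw [hper]
    have h2 : τ - 2 * Real.pi * n ∈ Set.Ioo (-Real.pi) 0 := ⟨by linarith, by linarith⟩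
    have h3 : Real.sin (-(τ - 2 * Real.pi * n)) > 0 :=
      Real.sin_pos_of_pos_of_lt_pi (by linarith [h2.2]) (by linarith [h2.1])
    rw [Real.sin_neg] at h3
    linarith

lemma phi_mono {c : ℝ} (hcpi : c ≤ Real.pi ^ 2) (n : ℕ) (hn : 1 ≤ n) :
    StrictMonoOn (phiAux c) (Set.Ioo (2 * Real.pi * (n : ℝ) - Real.pi) (2 * Real.pi * (n : ℝ))) := by
  apply strictMonoOn_of_deriv_pos (convex_Ioo _ _)
  · intro x hx
    obtain ⟨h1, h2⟩ := interval_facts n hn hx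
    obtain ⟨v, _, hd⟩ := deriv_pos_aux hcpi h1 h2
    exact hd.continuousAt.continuousWithinAt
  · rw [interior_Ioo]
    intro x hx
    obtain ⟨h1, h2⟩ := interval_facts n hn hx
    obtain ⟨v, hv, hd⟩ := deriv_pos_aux hcpi h1 h2
    rw [hd.deriv]
    exact hv

noncomputable def gAux (c t : ℝ) : ℝ :=
  Real.sqrt (t ^ 2 * Real.cos t ^ 2 + Real.sin t ^ 2 * (t ^ 2 - c))

lemma gAux_eq {c t : ℝ} (hS : Real.sin t < 0) :
    (-Real.sin t) * Real.sqrt (t ^ 2 * (Real.cos t / Real.sin t) ^ 2 + t ^ 2 - c)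
      = gAux c t := by
  have hS0 : Real.sin t ≠ 0 := ne_of_lt hS
  have hX : t ^ 2 * Real.cos t ^ 2 + Real.sin t ^ 2 * (t ^ 2 - c)
      = (-Real.sin t) ^ 2 * (t ^ 2 * (Real.cos t / Real.sin t) ^ 2 + t ^ 2 - c) := by
    field_simp; ring
  rw [gAux, hX, Real.sqrt_mul (sq_nonneg _), Real.sqrt_sq (by linarith : (0:ℝ) ≤ -Real.sin t)]

lemma WAux_pos {c t : ℝ} (hcpi : c ≤ Real.pi ^ 2) (hπ : Real.pi < t) :
    0 < Real.sqrt (t ^ 2 * (Real.cos t / Real.sin t) ^ 2 + t ^ 2 - c)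
      + t * (Real.cos t / Real.sin t) := by
  have hrad := radAux_pos hcpi hπ
  have hD : 0 < Real.sqrt (t ^ 2 * (Real.cos t / Real.sin t) ^ 2 + t ^ 2 - c) :=
    Real.sqrt_pos.mpr hrad
  have hD2 := Real.sq_sqrt hrad.le
  have h1 : Real.pi ^ 2 < t ^ 2 := by nlinarith [Real.pi_pos]
  nlinarith [hD2, hD, h1]

lemma yfAux_mul_W {c t : ℝ} (hcpi : c ≤ Real.pi ^ 2) (hπ : Real.pi < t) :
    yfAux c t * (Real.sqrt (t ^ 2 * (Real.cos t / Real.sin t) ^ 2 + t ^ 2 - c)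
      + t * (Real.cos t / Real.sin t)) = t ^ 2 - c := by
  have hrad := radAux_pos hcpi hπ
  have hD2 := Real.sq_sqrt hrad.le
  unfold yfAux
  nlinarith [hD2]

lemma den_pos {c t : ℝ} (hcpi : c ≤ Real.pi ^ 2) (hπ : Real.pi < t) (hS : Real.sin t < 0) :
    0 < gAux c t - t * Real.cos t := by
  have hS0 : Real.sin t ≠ 0 := ne_of_lt hS
  have hW := WAux_pos (c := c) hcpi hπ
  have hg := gAux_eq (c := c) hS
  have h2 : gAux c t - t * Real.cos t = (-Real.sin t) *
      (Real.sqrt (t ^ 2 * (Real.cos t / Real.sin t) ^ 2 + t ^ 2 - c)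
        + t * (Real.cos t / Real.sin t)) := by
    rw [mul_add, hg]; field_simp; ring
  rw [h2]
  exact mul_pos (by linarith) hW

lemma yf_den {c t : ℝ} (hcpi : c ≤ Real.pi ^ 2) (hπ : Real.pi < t) (hS : Real.sin t < 0) :
    yfAux c t * (gAux c t - t * Real.cos t) = (-Real.sin t) * (t ^ 2 - c) := by
  have hS0 : Real.sin t ≠ 0 := ne_of_lt hS
  have h1 := yfAux_mul_W (c := c) hcpi hπ
  have hg := gAux_eq (c := c) hS
  have h2 : gAux c t - t * Real.cos t = (-Real.sin t) *
      (Real.sqrt (t ^ 2 * (Real.cos t / Real.sin t) ^ 2 + t ^ 2 - c)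
        + t * (Real.cos t / Real.sin t)) := by
    rw [mul_add, hg]; field_simp; ring
  rw [h2]
  linear_combination (-Real.sin t) * h1

lemma gAux_le {c t : ℝ} (hc0 : 0 ≤ c) (ht : 0 ≤ t) : gAux c t ≤ t := by
  have h1 : t ^ 2 * Real.cos t ^ 2 + Real.sin t ^ 2 * (t ^ 2 - c) ≤ t ^ 2 := by
    nlinarith [Real.sin_sq_add_cos_sq t, sq_nonneg (Real.sin t), sq_nonneg t]
  calc gAux c t ≤ Real.sqrt (t ^ 2) := Real.sqrt_le_sqrt h1
  _ = t := Real.sqrt_sq ht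

lemma yf_eq_div {c t : ℝ} (hcpi : c ≤ Real.pi ^ 2) (hπ : Real.pi < t) (hS : Real.sin t < 0) :
    yfAux c t = (-Real.sin t) * (t ^ 2 - c) / (gAux c t - t * Real.cos t) := by
  rw [eq_div_iff (den_pos hcpi hπ hS).ne']
  exact yf_den hcpi hπ hS

lemma phi_eq {c t : ℝ} (hcpi : c ≤ Real.pi ^ 2) (hπ : Real.pi < t) (hS : Real.sin t < 0) :
    phiAux c t = Real.exp (yfAux c t) * (t * (t ^ 2 - c) / (gAux c t - t * Real.cos t)) := by
  have hden := den_pos hcpi hπ hS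
  have h := yf_den hcpi hπ hS
  have hS0 : Real.sin t ≠ 0 := ne_of_lt hS
  rw [phiAux, div_eq_iff (show -Real.sin t ≠ 0 from by intro hh; apply hS0; linarith)]
  have h2 : Real.exp (yfAux c t) * (t * (t ^ 2 - c) / (gAux c t - t * Real.cos t)) *
      (-Real.sin t) = (Real.exp (yfAux c t) * (t * (t ^ 2 - c)) * (-Real.sin t)) /
      (gAux c t - t * Real.cos t) := by ring
  rw [h2, eq_div_iff hden.ne']
  linear_combination (Real.exp (yfAux c t) * t) * h

lemma exists_left (c a : ℝ) (hcpi : c ≤ Real.pi ^ 2) (n : ℕ) (hn : 1 ≤ n) (r : ℝ)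
    (hr1 : 2 * Real.pi * (n : ℝ) - Real.pi < r) (hr2 : r < 2 * Real.pi * (n : ℝ))
    (ha : ((2 * Real.pi * (n : ℝ) - Real.pi) ^ 2 - c) / 2 < a) :
    ∃ l ∈ Set.Ioo (2 * Real.pi * (n : ℝ) - Real.pi) r, phiAux c l < a := by
  set t0 : ℝ := 2 * Real.pi * (n : ℝ) - Real.pi with ht0def
  have hπ := Real.pi_pos
  have hn' : (1 : ℝ) ≤ (n : ℝ) := by exact_mod_cast hn
  have ht0pos : 0 < t0 := by rw [ht0def]; nlinarith
  have hcos0 : Real.cos t0 = -1 := by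
    have h := Real.cos_add_int_mul_two_pi (-Real.pi) n
    rw [show -Real.pi + (n : ℤ) * (2 * Real.pi) = t0 by push_cast; rw [ht0def]; ring] at h
    rw [h, Real.cos_neg, Real.cos_pi]
  have hsin0 : Real.sin t0 = 0 := by
    have h := Real.sin_add_int_mul_two_pi (-Real.pi) n
    rw [show -Real.pi + (n : ℤ) * (2 * Real.pi) = t0 by push_cast; rw [ht0def]; ring] at h
    rw [h, Real.sin_neg, Real.sin_pi, neg_zero]
  have hg0 : gAux c t0 = t0 := by
    rw [gAux, hcos0, hsin0]
    norm_num
    exact Real.sqrt_sq ht0pos.le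
  have hden0 : gAux c t0 - t0 * Real.cos t0 = 2 * t0 := by rw [hg0, hcos0]; ring
  have hdne : gAux c t0 - t0 * Real.cos t0 ≠ 0 := by rw [hden0]; positivity
  set Ψ : ℝ → ℝ := fun x => Real.exp ((-Real.sin x) * (x ^ 2 - c) / (gAux c x - x * Real.cos x))
      * (x * (x ^ 2 - c) / (gAux c x - x * Real.cos x)) with hΨdef
  have hgc : Continuous (gAux c) := by
    apply Real.continuous_sqrt.comp
    fun_prop
  have hdenc : ContinuousAt (fun x => gAux c x - x * Real.cos x) t0 := by
    apply ContinuousAt.sub hgc.continuousAt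
    fun_prop
  have hΨc : ContinuousAt Ψ t0 := by
    apply ContinuousAt.mul
    · apply Real.continuous_exp.continuousAt.comp
      exact ContinuousAt.div (by fun_prop) hdenc hdne
    · exact ContinuousAt.div (by fun_prop) hdenc hdne
  have hΨ0 : Ψ t0 = (t0 ^ 2 - c) / 2 := by
    rw [hΨdef]
    simp only [hden0, hsin0, neg_zero, zero_mul, zero_div, Real.exp_zero, one_mul]
    field_simp [ht0pos.ne']
  have hmemc : t0 ∈ closure (Set.Ioo t0 r) := by
    rw [closure_Ioo (ne_of_lt hr1)]
    exact ⟨le_refl _, hr1.le⟩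
  haveI hnb := mem_closure_iff_nhdsWithin_neBot.mp hmemc
  have htd : Tendsto Ψ (nhdsWithin t0 (Set.Ioo t0 r)) (nhds ((t0 ^ 2 - c) / 2)) := by
    rw [← hΨ0]
    exact hΨc.continuousWithinAt.tendsto
  have hev := htd.eventually_lt_const ha
  obtain ⟨l, hl, hlmem⟩ := (hev.and eventually_mem_nhdsWithin).exists
  refine ⟨l, hlmem, ?_⟩
  have hl1 : l ∈ Set.Ioo t0 (2 * Real.pi * (n : ℝ)) := ⟨hlmem.1, lt_trans hlmem.2 hr2⟩
  obtain ⟨hπl, hSl⟩ := interval_facts n hn hl1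
  have heq : phiAux c l = Ψ l := by
    simp only [hΨdef]
    rw [phi_eq hcpi hπl hSl, yf_eq_div hcpi hπl hSl]
  rw [heq]
  exact hl

lemma exists_right (c a : ℝ) (hcpi : c ≤ Real.pi ^ 2) (n : ℕ) (hn : 1 ≤ n) (ha : 0 < a) :
    ∃ r ∈ Set.Ioo (2 * Real.pi * (n : ℝ) - Real.pi) (2 * Real.pi * (n : ℝ)),
      a < phiAux c r := by
  have hπ := Real.pi_pos
  have hπ3 := Real.pi_gt_three
  have hn' : (1 : ℝ) ≤ (n : ℝ) := by exact_mod_cast hn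
  set ε : ℝ := min (Real.pi / 3) (1 / (a + 1)) with hεdef
  have hε0 : 0 < ε := lt_min (by positivity) (by positivity)
  have hε3 : ε ≤ Real.pi / 3 := min_le_left _ _
  have hεa : ε ≤ 1 / (a + 1) := min_le_right _ _
  have hεπ : ε < Real.pi := by nlinarith
  set r : ℝ := 2 * Real.pi * (n : ℝ) - ε with hrdef
  have hrmem : r ∈ Set.Ioo (2 * Real.pi * (n : ℝ) - Real.pi) (2 * Real.pi * (n : ℝ)) :=
    ⟨by rw [hrdef]; linarith, by rw [hrdef]; linarith⟩
  obtain ⟨hπr, hSr⟩ := interval_facts n hn hrmem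
  have hsinr : Real.sin r = -Real.sin ε := by
    have h := Real.sin_add_int_mul_two_pi (-ε) n
    rw [show -ε + (n : ℤ) * (2 * Real.pi) = r by push_cast; rw [hrdef]; ring] at h
    rw [h, Real.sin_neg]
  have hcosr : Real.cos r = Real.cos ε := by
    have h := Real.cos_add_int_mul_two_pi (-ε) n
    rw [show -ε + (n : ℤ) * (2 * Real.pi) = r by push_cast; rw [hrdef]; ring] at h
    rw [h, Real.cos_neg]
  have hsε : 0 < Real.sin ε := Real.sin_pos_of_pos_of_lt_pi hε0 hεπ
  have hsε1 : Real.sin ε ≤ ε := Real.sin_le hε0.le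
  have hsεone : Real.sin ε ≤ 1 := Real.sin_le_one ε
  have hcosε : 1 / 2 ≤ Real.cos ε := by
    rw [← Real.cos_pi_div_three]
    exact Real.cos_le_cos_of_nonneg_of_le_pi hε0.le (by linarith) hε3
  have hr3 : 3 < r := by rw [hrdef]; nlinarith
  clear_value ε r
  clear hεdef hrdef
  -- key numeric bound : a < r * (cos ε / sin ε)
  have hεa2 : (a + 1) * ε ≤ 1 := by
    have h1 := mul_le_mul_of_nonneg_left hεa (show (0:ℝ) ≤ a + 1 by linarith)
    rw [mul_one_div, div_self (show a + 1 ≠ 0 by linarith)] at h1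
    exact h1
  have hkey : a < r * (Real.cos ε / Real.sin ε) := by
    rw [mul_div_assoc', lt_div_iff₀ hsε]
    nlinarith [mul_le_mul_of_nonneg_left hsε1 ha.le, hεa2, hε0,
      mul_nonneg (by linarith : (0:ℝ) ≤ r - 3) (by linarith : (0:ℝ) ≤ Real.cos ε)]
  -- y r > r * (cos ε / sin ε)
  have hrad := radAux_pos (c := c) hcpi hπr
  have hD : 0 < Real.sqrt (r ^ 2 * (Real.cos r / Real.sin r) ^ 2 + r ^ 2 - c) :=
    Real.sqrt_pos.mpr hrad
  have hylb : r * (Real.cos ε / Real.sin ε) < yfAux c r := by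
    rw [yfAux]
    have h1 : -r * (Real.cos r / Real.sin r) = r * (Real.cos ε / Real.sin ε) := by
      rw [hsinr, hcosr, div_neg]
      ring
    rw [h1]
    linarith [hD]
  have hyr : 0 < yfAux c r := yfAux_pos hcpi hπr
  -- phi ≥ y
  have hE : yfAux c r + 1 ≤ Real.exp (yfAux c r) := Real.add_one_le_exp _
  have hphi : phiAux c r = yfAux c r * (Real.exp (yfAux c r) * (r / Real.sin ε)) := by
    rw [phiAux, hsinr, neg_neg]
    ring
  have hone : 1 ≤ Real.exp (yfAux c r) * (r / Real.sin ε) := by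
    have h1 : 1 ≤ Real.exp (yfAux c r) := by linarith
    have h2 : 1 ≤ r / Real.sin ε := by
      rw [le_div_iff₀ hsε]
      nlinarith
    nlinarith
  refine ⟨r, hrmem, ?_⟩
  rw [hphi]
  calc a < yfAux c r := lt_trans hkey hylb
  _ ≤ yfAux c r * (Real.exp (yfAux c r) * (r / Real.sin ε)) :=
      le_mul_of_one_le_right hyr.le hone

lemma equation_iff {c t : ℝ} (κ : ℝ) (ht : 0 < t) (hS : Real.sin t < 0) :
    (yfAux c t * Real.exp (yfAux c t) = -2 * κ * Real.sin t / t) ↔ phiAux c t = 2 * κ := by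
  have hnS : -Real.sin t ≠ 0 := by intro h; nlinarith [neg_eq_zero.mp h]
  rw [phiAux, div_eq_iff hnS, eq_div_iff ht.ne']
  constructor <;> intro h <;> linear_combination h

set_option maxHeartbeats 1000000 in
/-- For `A, R > 0`, `16B²R² ≤ π²` and an integer `n ≥ 1`, the equation
`y(τ) e^{y(τ)} = −2A²R² sin τ / τ`, with
`y(τ) = −τ cot τ + √(τ²cot²τ + τ² − 16B²R²)`, has no solution in `(2πn − π, 2πn)` when
`4A²R² ≤ π²(2n−1)² − 16B²R²`, and exactly one solution there when
`4A²R² > π²(2n−1)² − 16B²R²`. -/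
theorem transcendental_solution_count (A B R : ℝ) (hA : 0 < A) (hR : 0 < R)
    (hBR : 16 * B ^ 2 * R ^ 2 ≤ Real.pi ^ 2)
    (n : ℕ) (hn : 1 ≤ n)
    (y : ℝ → ℝ)
    (hy : ∀ τ : ℝ, y τ = -τ * Real.cot τ +
      Real.sqrt (τ ^ 2 * (Real.cot τ) ^ 2 + τ ^ 2 - 16 * B ^ 2 * R ^ 2)) :
    (4 * A ^ 2 * R ^ 2 ≤ Real.pi ^ 2 * (2 * (n : ℝ) - 1) ^ 2 - 16 * B ^ 2 * R ^ 2 →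
      ¬∃ τ ∈ Set.Ioo (2 * Real.pi * (n : ℝ) - Real.pi) (2 * Real.pi * (n : ℝ)),
        y τ * Real.exp (y τ) = -2 * A ^ 2 * R ^ 2 * Real.sin τ / τ) ∧
    (4 * A ^ 2 * R ^ 2 > Real.pi ^ 2 * (2 * (n : ℝ) - 1) ^ 2 - 16 * B ^ 2 * R ^ 2 →
      ∃! τ : ℝ, τ ∈ Set.Ioo (2 * Real.pi * (n : ℝ) - Real.pi) (2 * Real.pi * (n : ℝ)) ∧
        y τ * Real.exp (y τ) = -2 * A ^ 2 * R ^ 2 * Real.sin τ / τ) := by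
  have hπ := Real.pi_pos
  have hn' : (1 : ℝ) ≤ (n : ℝ) := by exact_mod_cast hn
  set c : ℝ := 16 * B ^ 2 * R ^ 2 with hcdef
  have hc0 : 0 ≤ c := by rw [hcdef]; positivity
  have hcpi : c ≤ Real.pi ^ 2 := hBR
  clear_value c
  have hyf : y = yfAux c := funext fun t => by
    rw [hy t, Real.cot_eq_cos_div_sin]; rfl
  subst hyf
  have ht0sq : (2 * Real.pi * (n : ℝ) - Real.pi) ^ 2
      = Real.pi ^ 2 * (2 * (n : ℝ) - 1) ^ 2 := by ring
  have ht0pos : 0 < 2 * Real.pi * (n : ℝ) - Real.pi := by nlinarith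
  constructor
  · rintro hcond ⟨τ, hτmem, heq⟩
    obtain ⟨hπτ, hSτ⟩ := interval_facts n hn hτmem
    have hτ0 : 0 < τ := by linarith
    have hSne : 0 < -Real.sin τ := by linarith
    rw [eq_div_iff hτ0.ne'] at heq
    have hy0 : 0 < yfAux c τ := yfAux_pos hcpi hπτ
    have hb : (-Real.sin τ) * (τ ^ 2 - c) < 2 * τ * yfAux c τ := by
      have hd := yf_den (c := c) hcpi hπτ hSτ
      have hg := gAux_le (c := c) hc0 hτ0.le
      have hsin2 : 0 < Real.sin τ ^ 2 := by nlinarith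
      have hC : -1 < Real.cos τ := by
        nlinarith [Real.sin_sq_add_cos_sq τ]
      have hden_lt : gAux c τ - τ * Real.cos τ < 2 * τ := by nlinarith
      nlinarith [hd, mul_pos hy0
        (show 0 < 2 * τ - (gAux c τ - τ * Real.cos τ) by linarith)]
    have hE : 1 ≤ Real.exp (yfAux c τ) := by
      have h1 := Real.add_one_le_exp (yfAux c τ)
      linarith
    have hcond' : 4 * A ^ 2 * R ^ 2 ≤ (2 * Real.pi * (n : ℝ) - Real.pi) ^ 2 - c := by
      rw [ht0sq]; exact hcond
    have hsq : (2 * Real.pi * (n : ℝ) - Real.pi) ^ 2 < τ ^ 2 := by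
      nlinarith [hτmem.1]
    nlinarith [hb, heq, mul_le_mul_of_nonneg_right hcond' hSne.le,
      mul_lt_mul_of_pos_right hsq hSne,
      mul_le_mul_of_nonneg_left hE (show (0:ℝ) ≤ 2 * τ * yfAux c τ by positivity)]
  · intro hcond
    have ha : ((2 * Real.pi * (n : ℝ) - Real.pi) ^ 2 - c) / 2 < 2 * (A ^ 2 * R ^ 2) := by
      rw [ht0sq]; linarith
    obtain ⟨r, hrmem, har⟩ := exists_right c (2 * (A ^ 2 * R ^ 2)) hcpi n hn (by positivity)
    obtain ⟨l, hlmem, hal⟩ := exists_left c (2 * (A ^ 2 * R ^ 2)) hcpi n hn r hrmem.1 hrmem.2 ha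
    have hmono := phi_mono (c := c) hcpi n hn
    have hlr : l < r := hlmem.2
    have hIcc : Set.Icc l r ⊆
        Set.Ioo (2 * Real.pi * (n : ℝ) - Real.pi) (2 * Real.pi * (n : ℝ)) := by
      intro x hx
      exact ⟨lt_of_lt_of_le hlmem.1 hx.1, lt_of_le_of_lt hx.2 hrmem.2⟩
    have hcont : ContinuousOn (phiAux c) (Set.Icc l r) := by
      intro x hx
      obtain ⟨h1, h2⟩ := interval_facts n hn (hIcc hx)
      obtain ⟨v, _, hd⟩ := deriv_pos_aux hcpi h1 h2
      exact hd.continuousAt.continuousWithinAt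
    obtain ⟨τ, hτmem, hτval⟩ := intermediate_value_Ioo hlr.le hcont ⟨hal, har⟩
    have hτIoo : τ ∈ Set.Ioo (2 * Real.pi * (n : ℝ) - Real.pi) (2 * Real.pi * (n : ℝ)) :=
      ⟨lt_trans hlmem.1 hτmem.1, lt_trans hτmem.2 hrmem.2⟩
    obtain ⟨hπτ, hSτ⟩ := interval_facts n hn hτIoo
    have hτ0 : 0 < τ := by linarith
    refine ⟨τ, ⟨hτIoo, ?_⟩, ?_⟩
    · have h2 := (equation_iff (c := c) (A ^ 2 * R ^ 2) hτ0 hSτ).mpr hτval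
      rw [h2]; ring
    · rintro z ⟨hzIoo, hzeq⟩
      obtain ⟨hπz, hSz⟩ := interval_facts n hn hzIoo
      have hz0 : 0 < z := by linarith
      have hzval : phiAux c z = 2 * (A ^ 2 * R ^ 2) :=
        (equation_iff (c := c) (A ^ 2 * R ^ 2) hz0 hSz).mp (by rw [hzeq]; ring)
      exact hmono.injOn hzIoo hτIoo (by rw [hzval, hτval])
end

section
/- Let A > 0, B ∈ ℝ and R > 0 with 0 < R < π/(2√(4B² + A²)). Then for every real k with k ≤ −π/(4R), the real part of a₁(k) = 1 + A² e^{4ikR}/(4(k² − B²)) is strictly positive; that is, 1 + A² cos(4kR)/(4(k² − B²)) > 0 for all real k ≤ −π/(4R). (In particular k² > B² for such k, so a₁(k) is well defined.) -/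
/-! For `k ≤ -π/(4R)` the bound on `R` forces `4k² > 4B² + A²`, so the denominator
`4(k² - B²)` exceeds `A² ≥ |A² cos(4kR)|`. -/

open Real

lemma one_add_div_pos_of_abs_lt {u D : ℝ} (h : |u| < D) : 0 < 1 + u / D := by
  have hD : 0 < D := (abs_nonneg u).trans_lt h
  have : -D < u := (abs_lt.mp h).1
  rw [← div_self hD.ne', ← add_div]
  exact div_pos (by linarith) hD

lemma abs_mul_cos_le_sq (a x : ℝ) : |a ^ 2 * cos x| ≤ a ^ 2 := by
  rw [abs_mul, abs_sq]
  exact mul_le_of_le_one_right (sq_nonneg a) (abs_cos_le_one x)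

lemma sqrt_pos_of_lt_pi_div {s R : ℝ} (hR : 0 < R) (hRlt : R < π / (2 * √s)) : 0 < √s := by
  by_contra h
  rw [le_antisymm (not_lt.mp h) (sqrt_nonneg s), mul_zero, div_zero] at hRlt
  linarith

lemma lt_four_mul_sq_of_le_neg_pi_div {s R k : ℝ} (hR : 0 < R)
    (hRlt : R < π / (2 * √s)) (hk : k ≤ -π / (4 * R)) : s < 4 * k ^ 2 := by
  have hs : 0 < √s := sqrt_pos_of_lt_pi_div hR hRlt
  have hRs : 2 * √s * R < π := by rwa [lt_div_iff₀ (by positivity), mul_comm] at hRlt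
  have hk' : π ≤ -k * (4 * R) := by
    rwa [neg_div, le_neg, div_le_iff₀ (by positivity)] at hk
  have hsk : √s < -2 * k := by nlinarith
  calc s = √s ^ 2 := (sq_sqrt (sqrt_pos.mp hs).le).symm
    _ < (-2 * k) ^ 2 := by gcongr
    _ = 4 * k ^ 2 := by ring

theorem re_a1_pos_general (A B R : ℝ) (hR : 0 < R)
    (hRlt : R < Real.pi / (2 * Real.sqrt (4 * B ^ 2 + A ^ 2))) :
    ∀ k : ℝ, k ≤ -Real.pi / (4 * R) →
      B ^ 2 < k ^ 2 ∧ 0 < 1 + A ^ 2 * Real.cos (4 * k * R) / (4 * (k ^ 2 - B ^ 2)) := by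
  intro k hk
  have hden : A ^ 2 < 4 * (k ^ 2 - B ^ 2) := by
    linarith [lt_four_mul_sq_of_le_neg_pi_div hR hRlt hk]
  exact ⟨by linarith [sq_nonneg A],
    one_add_div_pos_of_abs_lt ((abs_mul_cos_le_sq A _).trans_lt hden)⟩

/-- For `0 < R < π/(2√(4B² + A²))`, the real part of `a₁(k) = 1 + A²e^{4ikR}/(4(k² − B²))` is
strictly positive for all real `k ≤ −π/(4R)`; in particular `k² > B²` for such `k`. -/
theorem re_a1_pos (A B R : ℝ) (hA : 0 < A) (hR : 0 < R)
    (hRlt : R < Real.pi / (2 * Real.sqrt (4 * B ^ 2 + A ^ 2))) :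
    ∀ k : ℝ, k ≤ -Real.pi / (4 * R) →
      B ^ 2 < k ^ 2 ∧ 0 < 1 + A ^ 2 * Real.cos (4 * k * R) / (4 * (k ^ 2 - B ^ 2)) :=
  re_a1_pos_general A B R hR hRlt
end

section
/- Let A > 0, B ∈ ℝ with B ≠ 0, and R > 0 satisfy 0 < 4|B|R < π and 0 < R < π/(2√(4B² + A²)), and let a₁(k) = 1 + A² e^{4ikR}/(4(k² − B²)). Then (a) a₁(k) ≠ 0 for every real k with k < −|B|; and (b) if φ : (−∞, −|B|) → ℝ is any continuous function with a₁(k) = |a₁(k)| e^{iφ(k)} for all k < −|B| and φ(k) → 0 as k → −∞, then φ(k) ∈ (−π, π) for all k < −|B|, and the one-sided limit of φ(k) as k → −|B| from the left exists and lies in (−π, 0). -/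
open Complex Filter Set

private lemma a1w_formula (A B R : ℝ) (a₁ : ℂ → ℂ)
    (ha₁ : ∀ k : ℂ, a₁ k =
      1 + (A : ℂ) ^ 2 * Complex.exp (4 * Complex.I * k * (R : ℂ)) / (4 * (k ^ 2 - (B : ℂ) ^ 2)))
    (k : ℝ) (hk : k ^ 2 - B ^ 2 ≠ 0) :
    a₁ (k : ℂ) =
      ((1 + A ^ 2 / (4 * (k ^ 2 - B ^ 2)) * Real.cos (4 * k * R) : ℝ) : ℂ)
      + ((A ^ 2 / (4 * (k ^ 2 - B ^ 2)) * Real.sin (4 * k * R) : ℝ) : ℂ) * Complex.I := by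
  rw [ha₁]
  have h1 : (4 : ℂ) * Complex.I * (k : ℂ) * (R : ℂ) = ((4 * k * R : ℝ) : ℂ) * Complex.I := by
    push_cast; ring
  rw [h1, Complex.exp_mul_I, ← Complex.ofReal_cos, ← Complex.ofReal_sin]
  have h3 : ((k : ℂ) ^ 2 - (B : ℂ) ^ 2) ≠ 0 := by
    have : ((k : ℂ) ^ 2 - (B : ℂ) ^ 2) = ((k ^ 2 - B ^ 2 : ℝ) : ℂ) := by push_cast; ring
    rw [this]
    exact Complex.ofReal_ne_zero.mpr hk
  field_simp
  push_cast
  field_simp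
  ring

set_option maxHeartbeats 1600000 in
/-- For `B ≠ 0`, `0 < 4|B|R < π` and `0 < R < π/(2√(4B² + A²))`: (a) the spectral function
`a₁(k) = 1 + A²e^{4ikR}/(4(k² − B²))` does not vanish for real `k < −|B|`; and (b) any continuous
branch `φ` of the argument of `a₁` on `(−∞, −|B|)` normalized by `φ(k) → 0` as `k → −∞`
satisfies `φ(k) ∈ (−π, π)` there and has a one-sided limit at `−|B|` lying in `(−π, 0)`. -/
theorem a1_argument_winding (A B R : ℝ) (hA : 0 < A) (hB : B ≠ 0) (hR : 0 < R)
    (hBR : 4 * |B| * R < Real.pi)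
    (hRlt : R < Real.pi / (2 * Real.sqrt (4 * B ^ 2 + A ^ 2)))
    (a₁ : ℂ → ℂ)
    (ha₁ : ∀ k : ℂ, a₁ k =
      1 + (A : ℂ) ^ 2 * Complex.exp (4 * Complex.I * k * (R : ℂ)) / (4 * (k ^ 2 - (B : ℂ) ^ 2))) :
    (∀ k : ℝ, k < -|B| → a₁ (k : ℂ) ≠ 0) ∧
    (∀ φ : ℝ → ℝ, ContinuousOn φ (Set.Iio (-|B|)) →
      (∀ k : ℝ, k < -|B| →
        a₁ (k : ℂ) = (‖a₁ (k : ℂ)‖ : ℂ) * Complex.exp (Complex.I * (φ k : ℂ))) →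
      Filter.Tendsto φ Filter.atBot (nhds 0) →
      (∀ k : ℝ, k < -|B| → φ k ∈ Set.Ioo (-Real.pi) Real.pi) ∧
      ∃ L ∈ Set.Ioo (-Real.pi) (0 : ℝ),
        Filter.Tendsto φ (nhdsWithin (-|B|) (Set.Iio (-|B|))) (nhds L)) := by
  have hs : 0 < |B| := abs_pos.mpr hB
  have hπ := Real.pi_pos
  -- positivity of k² - B² on Iio (-|B|)
  have hd : ∀ k : ℝ, k < -|B| → 0 < k ^ 2 - B ^ 2 := by
    intro k hk
    nlinarith [_root_.sq_abs B, abs_nonneg B]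
  -- the threshold k₀
  set k₀ : ℝ := Real.sqrt (B ^ 2 + A ^ 2 / 4) with hk₀def
  have hk₀pos : 0 < k₀ := Real.sqrt_pos.mpr (by positivity)
  have hk₀sq : k₀ ^ 2 = B ^ 2 + A ^ 2 / 4 := Real.sq_sqrt (by positivity)
  have hk₀R : 4 * k₀ * R < Real.pi := by
    have h4 : Real.sqrt (4 * B ^ 2 + A ^ 2) = 2 * k₀ := by
      rw [show (4 : ℝ) * B ^ 2 + A ^ 2 = 2 ^ 2 * (B ^ 2 + A ^ 2 / 4) by ring,
        Real.sqrt_mul (by positivity), Real.sqrt_sq (by norm_num)]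
    rw [h4] at hRlt
    have h2 : 0 < 2 * (2 * k₀) := by positivity
    calc 4 * k₀ * R = (2 * (2 * k₀)) * R := by ring
      _ < Real.pi := by
          rw [lt_div_iff₀ h2] at hRlt; linarith [hRlt]
  have habsk₀ : |B| < k₀ := by
    nlinarith [_root_.sq_abs B, abs_nonneg B, hA]
  -- membership in the slit plane
  have hslit : ∀ k : ℝ, k < -|B| → a₁ (k : ℂ) ∈ Complex.slitPlane := by
    intro k hk
    have hdk := hd k hk
    have hne : k ^ 2 - B ^ 2 ≠ 0 := ne_of_gt hdk
    set c : ℝ := A ^ 2 / (4 * (k ^ 2 - B ^ 2)) with hcdef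
    have hcpos : 0 < c := by positivity
    set θ : ℝ := 4 * k * R with hθdef
    have hre : (a₁ (k : ℂ)).re = 1 + c * Real.cos θ := by
      rw [a1w_formula A B R a₁ ha₁ k hne]
      simp only [Complex.add_re, Complex.ofReal_re, Complex.mul_re, Complex.ofReal_im,
        Complex.I_re, Complex.I_im]
      ring
    have him : (a₁ (k : ℂ)).im = c * Real.sin θ := by
      rw [a1w_formula A B R a₁ ha₁ k hne]
      simp only [Complex.add_im, Complex.ofReal_im, Complex.mul_im, Complex.ofReal_re,
        Complex.I_re, Complex.I_im]
      ring
    by_cases hsin : Real.sin θ = 0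
    · left
      rw [hre]
      have hcos : Real.cos θ = 1 ∨ Real.cos θ = -1 := by
        have hpyth := Real.sin_sq_add_cos_sq θ
        have hfac : (Real.cos θ - 1) * (Real.cos θ + 1) = 0 := by nlinarith
        rcases mul_eq_zero.mp hfac with h | h
        · left; linarith
        · right; linarith
      rcases hcos with hcos | hcos
      · rw [hcos]; nlinarith
      · -- need c < 1, i.e. k < -k₀
        have hkk₀ : k < -k₀ := by
          by_contra hcon
          push_neg at hcon
          have hθ1 : -Real.pi < θ := by
            have h5 : -k₀ * R ≤ k * R := mul_le_mul_of_nonneg_right hcon (le_of_lt hR)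
            have : -(4 * k₀ * R) ≤ θ := by rw [hθdef]; linarith
            linarith
          have hθ2 : θ < 0 := by
            have hkneg : k < 0 := by linarith
            have h6 : k * R < 0 := mul_neg_of_neg_of_pos hkneg hR
            rw [hθdef]; linarith
          exact absurd hsin (ne_of_lt (Real.sin_neg_of_neg_of_neg_pi_lt hθ2 hθ1))
        have hc1 : c < 1 := by
          rw [hcdef, div_lt_one (by positivity)]
          have h1 : 0 < -k - k₀ := by linarith
          have h2 : 0 < -k + k₀ := by linarith
          have h3 := mul_pos h1 h2
          nlinarith [h3]
        rw [hcos]; nlinarith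
    · right
      rw [him]
      exact mul_ne_zero (ne_of_gt hcpos) hsin
  have hA1ne : ∀ k : ℝ, k < -|B| → a₁ (k : ℂ) ≠ 0 := fun k hk =>
    Complex.slitPlane_ne_zero (hslit k hk)
  refine ⟨hA1ne, ?_⟩
  intro φ hφc hφb hφ0
  -- continuity of a₁ on reals in Iio (-|B|)
  have hcontA : ∀ k : ℝ, k < -|B| → ContinuousAt (fun x : ℝ => a₁ (x : ℂ)) k := by
    intro k hk
    have heq : (fun x : ℝ => a₁ (x : ℂ)) = fun x : ℝ =>
        1 + (A : ℂ) ^ 2 * Complex.exp (4 * Complex.I * (x : ℂ) * (R : ℂ))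
          / (4 * ((x : ℂ) ^ 2 - (B : ℂ) ^ 2)) := by
      funext x; rw [ha₁]
    rw [heq]
    have hden : (4 : ℂ) * ((k : ℂ) ^ 2 - (B : ℂ) ^ 2) ≠ 0 := by
      have : ((k : ℂ) ^ 2 - (B : ℂ) ^ 2) = ((k ^ 2 - B ^ 2 : ℝ) : ℂ) := by push_cast; ring
      rw [this]
      simp only [ne_eq, mul_eq_zero, Complex.ofReal_eq_zero]
      push_neg
      exact ⟨by norm_num, ne_of_gt (hd k hk)⟩
    fun_prop (disch := assumption)
  have hcontArg : ∀ k : ℝ, k < -|B| → ContinuousAt (fun x : ℝ => (a₁ (x : ℂ)).arg) k := by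
    intro k hk
    exact ContinuousAt.comp (g := Complex.arg) (f := fun x : ℝ => a₁ (x : ℂ))
      (Complex.continuousAt_arg (hslit k hk)) (hcontA k hk)
  -- φ - arg ∈ 2πℤ
  have hmod : ∀ k : ℝ, k < -|B| → ∃ n : ℤ, φ k - (a₁ (k : ℂ)).arg = n * (2 * Real.pi) := by
    intro k hk
    have h1 := hφb k hk
    have h2 := (Complex.norm_mul_exp_arg_mul_I (a₁ (k : ℂ))).symm
    have habs : (‖a₁ (k : ℂ)‖ : ℂ) ≠ 0 := by
      simp only [ne_eq, Complex.ofReal_eq_zero, norm_eq_zero]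
      exact hA1ne k hk
    have hexp : Complex.exp (Complex.I * (φ k : ℂ)) =
        Complex.exp ((((a₁ (k : ℂ)).arg : ℝ) : ℂ) * Complex.I) := by
      exact mul_left_cancel₀ habs (h1.symm.trans h2)
    have : Complex.exp (Complex.I * (φ k : ℂ) - (((a₁ (k : ℂ)).arg : ℝ) : ℂ) * Complex.I) = 1 := by
      rw [Complex.exp_sub, hexp, div_self (Complex.exp_ne_zero _)]
    rw [Complex.exp_eq_one_iff] at this
    obtain ⟨n, hn⟩ := this
    refine ⟨n, ?_⟩
    have h7 : ((φ k - (a₁ (k : ℂ)).arg : ℝ) : ℂ) * Complex.I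
        = ((n * (2 * Real.pi) : ℝ) : ℂ) * Complex.I := by
      push_cast
      linear_combination hn
    have := mul_right_cancel₀ Complex.I_ne_zero h7
    exact_mod_cast this
  -- g := φ - arg ∘ a₁ is constant on Iio (-|B|)
  set g : ℝ → ℝ := fun k => φ k - (a₁ (k : ℂ)).arg with hgdef
  have hgcont : ContinuousOn g (Set.Iio (-|B|)) := by
    apply ContinuousOn.sub hφc
    intro k hk
    exact (hcontArg k hk).continuousWithinAt
  have hgconst : ∀ k₁ ∈ Set.Iio (-|B|), ∀ k₂ ∈ Set.Iio (-|B|), g k₁ = g k₂ := by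
    have key : ∀ k₁ k₂ : ℝ, k₁ ≤ k₂ → k₂ < -|B| → g k₁ = g k₂ := by
      intro k₁ k₂ hle hk₂
      by_contra hne
      have hk₁ : k₁ < -|B| := lt_of_le_of_lt hle hk₂
      obtain ⟨n₁, hn₁⟩ := hmod k₁ hk₁
      obtain ⟨n₂, hn₂⟩ := hmod k₂ hk₂
      have hgn₁ : g k₁ = (n₁ : ℝ) * (2 * Real.pi) := hn₁
      have hgn₂ : g k₂ = (n₂ : ℝ) * (2 * Real.pi) := hn₂
      have hcIcc : ContinuousOn g (Set.Icc k₁ k₂) := by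
        apply hgcont.mono
        intro x hx
        exact lt_of_le_of_lt hx.2 hk₂
      have parity : ∀ c : ℝ, c ∈ Set.Icc k₁ k₂ →
          (g c = g k₁ + Real.pi ∨ g c = g k₁ - Real.pi) → False := by
        intro c hc hgc
        have hcIio : c < -|B| := lt_of_le_of_lt hc.2 hk₂
        obtain ⟨m, hm⟩ := hmod c hcIio
        have hgm : g c = (m : ℝ) * (2 * Real.pi) := hm
        rcases hgc with h | h
        · have h2 : (m : ℝ) = (n₁ : ℝ) + 1 / 2 := by
            rw [hgm, hgn₁] at h
            have h2π : (2 * Real.pi) ≠ 0 := by positivity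
            apply mul_right_cancel₀ h2π
            rw [h]; ring
          have h3 : (2 * m : ℤ) = 2 * n₁ + 1 := by
            have : (2 * m : ℝ) = 2 * n₁ + 1 := by linarith
            exact_mod_cast this
          omega
        · have h2 : (m : ℝ) = (n₁ : ℝ) - 1 / 2 := by
            rw [hgm, hgn₁] at h
            have h2π : (2 * Real.pi) ≠ 0 := by positivity
            apply mul_right_cancel₀ h2π
            rw [h]; ring
          have h3 : (2 * m : ℤ) = 2 * n₁ - 1 := by
            have : (2 * m : ℝ) = 2 * n₁ - 1 := by linarith
            exact_mod_cast this
          omega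
      rcases lt_or_gt_of_ne hne with hlt | hlt
      · have hnlt : (n₁ : ℝ) < n₂ := by
          rw [hgn₁, hgn₂] at hlt
          have h2π : 0 < 2 * Real.pi := by linarith
          exact lt_of_mul_lt_mul_right (by linarith [hlt]) h2π.le
        have hnle : (n₁ : ℤ) + 1 ≤ n₂ := by exact_mod_cast Int.add_one_le_iff.mpr (by exact_mod_cast hnlt)
        have hnle' : (n₁ : ℝ) + 1 ≤ (n₂ : ℝ) := by exact_mod_cast hnle
        have hmem : g k₁ + Real.pi ∈ Set.Icc (g k₁) (g k₂) := by
          constructor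
          · linarith
          · rw [hgn₁, hgn₂]; nlinarith [hnle', hπ]
        obtain ⟨c, hc, hgc⟩ := intermediate_value_Icc hle hcIcc hmem
        exact parity c hc (Or.inl hgc)
      · have hnlt : (n₂ : ℝ) < n₁ := by
          rw [hgn₁, hgn₂] at hlt
          have h2π : 0 < 2 * Real.pi := by linarith
          exact lt_of_mul_lt_mul_right (by linarith [hlt]) h2π.le
        have hnle : (n₂ : ℤ) + 1 ≤ n₁ := by exact_mod_cast Int.add_one_le_iff.mpr (by exact_mod_cast hnlt)
        have hnle' : (n₂ : ℝ) + 1 ≤ (n₁ : ℝ) := by exact_mod_cast hnle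
        have hmem : g k₁ - Real.pi ∈ Set.Icc (g k₂) (g k₁) := by
          constructor
          · rw [hgn₁, hgn₂]; nlinarith [hnle', hπ]
          · linarith
        obtain ⟨c, hc, hgc⟩ := intermediate_value_Icc' hle hcIcc hmem
        exact parity c hc (Or.inr hgc)
    intro k₁ hk₁ k₂ hk₂
    rcases le_total k₁ k₂ with h | h
    · exact key k₁ k₂ h hk₂
    · exact (key k₂ k₁ h hk₁).symm
  -- a₁ → 1 at -∞
  have hta : Filter.Tendsto (fun k : ℝ => a₁ (k : ℂ)) Filter.atBot (nhds 1) := by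
    rw [tendsto_iff_norm_sub_tendsto_zero]
    have hc0 : Filter.Tendsto (fun k : ℝ => A ^ 2 / (4 * (k ^ 2 - B ^ 2))) Filter.atBot (nhds 0) := by
      apply Filter.Tendsto.div_atTop tendsto_const_nhds
      apply Filter.Tendsto.const_mul_atTop (by norm_num : (0:ℝ) < 4)
      have h1 : Filter.Tendsto (fun k : ℝ => k ^ 2) Filter.atBot Filter.atTop := by
        have := (tendsto_pow_atTop (n := 2) (by norm_num)).comp tendsto_neg_atBot_atTop (α := ℝ)
        convert this using 2 with k
        simp [Function.comp]
      exact Filter.tendsto_atTop_add_const_right _ (-B ^ 2) h1 |>.congr (by intro x; ring)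
    apply squeeze_zero_norm' _ hc0
    filter_upwards [Filter.eventually_lt_atBot (-|B|)] with k hk
    have hdk := hd k hk
    have hne : k ^ 2 - B ^ 2 ≠ 0 := ne_of_gt hdk
    have : a₁ (k : ℂ) - 1 =
        ((A ^ 2 / (4 * (k ^ 2 - B ^ 2)) * Real.cos (4 * k * R) : ℝ) : ℂ)
        + ((A ^ 2 / (4 * (k ^ 2 - B ^ 2)) * Real.sin (4 * k * R) : ℝ) : ℂ) * Complex.I := by
      rw [a1w_formula A B R a₁ ha₁ k hne]; push_cast; ring
    rw [this, Complex.norm_add_mul_I]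
    set c : ℝ := A ^ 2 / (4 * (k ^ 2 - B ^ 2)) with hcdef
    have hcpos : 0 < c := by positivity
    have : (c * Real.cos (4 * k * R)) ^ 2 + (c * Real.sin (4 * k * R)) ^ 2 = c ^ 2 := by
      have := Real.sin_sq_add_cos_sq (4 * k * R); nlinarith
    rw [this, Real.sqrt_sq hcpos.le]
    simp [Real.norm_eq_abs, abs_of_pos hcpos]
  -- arg ∘ a₁ → 0 at -∞
  have htarg : Filter.Tendsto (fun k : ℝ => (a₁ (k : ℂ)).arg) Filter.atBot (nhds 0) := by
    have h1 : ContinuousAt Complex.arg 1 := Complex.continuousAt_arg (by simp [Complex.slitPlane]) 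
    have := h1.tendsto.comp hta
    simpa [Function.comp_def] using this
  -- g → 0 at -∞, hence g ≡ 0, hence φ = arg ∘ a₁ on Iio
  have hg0 : ∀ k : ℝ, k < -|B| → g k = 0 := by
    intro k hk
    have h1 : Filter.Tendsto g Filter.atBot (nhds 0) := by
      have := hφ0.sub htarg
      simpa using this
    have h2 : Filter.Tendsto g Filter.atBot (nhds (g k)) := by
      apply Filter.Tendsto.congr' _ tendsto_const_nhds
      filter_upwards [Filter.eventually_lt_atBot (-|B|)] with x hx
      exact hgconst k hk x hx
    exact (tendsto_nhds_unique h2 h1)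
  have hφeq : ∀ k : ℝ, k < -|B| → φ k = (a₁ (k : ℂ)).arg := by
    intro k hk
    have h0 : φ k - (a₁ (k : ℂ)).arg = 0 := hg0 k hk
    linarith
  constructor
  · intro k hk
    rw [hφeq k hk]
    refine ⟨Complex.neg_pi_lt_arg _, lt_of_le_of_ne (Complex.arg_le_pi _) ?_⟩
    intro hcon
    rw [Complex.arg_eq_pi_iff] at hcon
    rcases hslit k hk with h | h
    · linarith [hcon.1]
    · exact h hcon.2
  · -- the limit L = -4|B|R
    refine ⟨-(4 * |B| * R), ⟨by linarith, by nlinarith⟩, ?_⟩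
    set θ₀ : ℝ := -(4 * |B| * R) with hθ₀def
    have hθ₀mem : θ₀ ∈ Set.Ioc (-Real.pi) Real.pi := ⟨by linarith, by nlinarith⟩
    have hθ₀neg : θ₀ < 0 := by nlinarith
    -- auxiliary G
    set G : ℝ → ℂ := fun k => ((k ^ 2 - B ^ 2 : ℝ) : ℂ)
        + ((A ^ 2 / 4 : ℝ) : ℂ) * Complex.exp (((4 * k * R : ℝ) : ℂ) * Complex.I) with hGdef
    have hGcont : ContinuousAt G (-|B|) := by fun_prop
    have hGval : G (-|B|) = ((A ^ 2 / 4 : ℝ) : ℂ) * (Complex.cos (θ₀ : ℂ) + Complex.sin (θ₀ : ℂ) * Complex.I) := by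
      rw [hGdef]
      simp only
      rw [Complex.exp_mul_I]
      have h1 : ((-|B|) ^ 2 - B ^ 2 : ℝ) = 0 := by
        rw [neg_pow]; simp [_root_.sq_abs]
      have h2 : (4 * (-|B|) * R : ℝ) = θ₀ := by rw [hθ₀def]; ring
      rw [h1, h2]
      push_cast
      ring
    have hGarg : (G (-|B|)).arg = θ₀ := by
      rw [hGval, Complex.arg_real_mul _ (by positivity : (0:ℝ) < A ^ 2 / 4)]
      exact Complex.arg_cos_add_sin_mul_I hθ₀mem
    have hGslit : G (-|B|) ∈ Complex.slitPlane := by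
      rw [hGval]
      right
      have him : (((A ^ 2 / 4 : ℝ) : ℂ) * (Complex.cos (θ₀ : ℂ) + Complex.sin (θ₀ : ℂ) * Complex.I)).im
          = A ^ 2 / 4 * Real.sin θ₀ := by
        simp only [Complex.mul_im, Complex.ofReal_re, Complex.ofReal_im, Complex.add_im,
          Complex.add_re, Complex.mul_re, Complex.cos_ofReal_im, Complex.cos_ofReal_re,
          Complex.sin_ofReal_re, Complex.sin_ofReal_im, Complex.I_re, Complex.I_im]
        ring
      rw [him]
      have hsin : Real.sin θ₀ < 0 := Real.sin_neg_of_neg_of_neg_pi_lt hθ₀neg hθ₀mem.1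
      exact ne_of_lt (mul_neg_of_pos_of_neg (by positivity) hsin)
    have hargG : Filter.Tendsto (fun k : ℝ => (G k).arg)
        (nhdsWithin (-|B|) (Set.Iio (-|B|))) (nhds θ₀) := by
      have h1 : Filter.Tendsto G (nhdsWithin (-|B|) (Set.Iio (-|B|))) (nhds (G (-|B|))) :=
        (hGcont.tendsto).mono_left nhdsWithin_le_nhds
      have h2 := (Complex.continuousAt_arg hGslit).tendsto.comp h1
      rw [hGarg] at h2
      exact h2
    -- transfer from G to a₁ and then to φ
    apply Filter.Tendsto.congr' _ hargG
    filter_upwards [self_mem_nhdsWithin] with k hk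
    have hk' : k < -|B| := hk
    have hdk := hd k hk'
    have hGa : G k = ((k ^ 2 - B ^ 2 : ℝ) : ℂ) * a₁ (k : ℂ) := by
      rw [ha₁, hGdef]
      simp only
      have h6 : ((k : ℂ) ^ 2 - (B : ℂ) ^ 2) ≠ 0 := by
        have h3 : ((k : ℂ) ^ 2 - (B : ℂ) ^ 2) = ((k ^ 2 - B ^ 2 : ℝ) : ℂ) := by push_cast; ring
        rw [h3]
        exact Complex.ofReal_ne_zero.mpr (ne_of_gt hdk)
      have h5 : (4 : ℂ) * Complex.I * (k : ℂ) * (R : ℂ) = ((4 * k * R : ℝ) : ℂ) * Complex.I := by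
        push_cast; ring
      rw [h5]
      push_cast
      field_simp
    rw [hφeq k hk', hGa, Complex.arg_real_mul _ hdk]
end

section
/- Let B be a nonzero real number and c₁, c₂ complex numbers with 4B² + c₁c₂ ≠ 0. Define A₁ = (B c₁ c₂ − 4B³)/(4B² + c₁ c₂), A₂ = 4B² c₁/(4B² + c₁ c₂), A₃ = 4B² c₂/(4B² + c₁ c₂), A₄ = (4B³ − B c₁ c₂)/(4B² + c₁ c₂), and let M(k) be the 2×2 matrix-valued rational function with entries M₁₁(k) = (k + A₁)/(k − B), M₁₂(k) = A₃/(k + B), M₂₁(k) = A₂/(k − B), M₂₂(k) = (k + A₄)/(k + B), defined for k ∈ ℂ \ {B, −B}. Then: (i) M(k) → I (the 2×2 identity matrix) as |k| → ∞; (ii) the residue at k = B of the first column of M equals c₁ times the second column of M evaluated at k = B, i.e. lim_{k→B} (k − B)·(M₁₁(k), M₂₁(k)) = c₁·(M₁₂(B), M₂₂(B)); and (iii) the residue at k = −B of the second column of M equals c₂ times the first column of M evaluated at k = −B, i.e. lim_{k→−B} (k + B)·(M₁₂(k), M₂₂(k)) = c₂·(M₁₁(−B), M₂₁(−B)). -/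
open Filter Topology Bornology

lemma aux_sub_cobounded (b : ℂ) :
    Tendsto (fun k : ℂ => k - b) (cobounded ℂ) (cobounded ℂ) := by
  rw [← tendsto_norm_atTop_iff_cobounded]
  apply tendsto_atTop_mono (fun k => norm_sub_norm_le k b)
  exact tendsto_atTop_add_const_right _ (-‖b‖) tendsto_norm_cobounded_atTop

lemma aux_div_tendsto (a b : ℂ) :
    Tendsto (fun k : ℂ => a / (k - b)) (cobounded ℂ) (nhds 0) := by
  have h := (tendsto_inv₀_cobounded.comp (aux_sub_cobounded b)).const_mul a
  simpa [div_eq_mul_inv, Function.comp_def] using h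

lemma aux_one_tendsto (a b : ℂ) :
    Tendsto (fun k : ℂ => (k + a) / (k - b)) (cobounded ℂ) (nhds 1) := by
  have h := (aux_div_tendsto (a + b) b).const_add 1
  rw [add_zero] at h
  apply h.congr'
  filter_upwards [(aux_sub_cobounded b).eventually_ne_cobounded 0] with k hk
  field_simp
  ring

/-- The explicit rational solution of the model Riemann–Hilbert problem with residue conditions
at `k = B` and `k = −B`: `M(k) → I` as `|k| → ∞`, the residue of the first column of `M` at
`k = B` equals `c₁` times the second column at `B`, and the residue of the second column at
`k = −B` equals `c₂` times the first column at `−B`. -/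
theorem model_RHP_solution (B : ℝ) (hB : B ≠ 0) (c₁ c₂ : ℂ)
    (hden : 4 * (B : ℂ) ^ 2 + c₁ * c₂ ≠ 0)
    (A₁ A₂ A₃ A₄ : ℂ)
    (hA₁ : A₁ = ((B : ℂ) * c₁ * c₂ - 4 * (B : ℂ) ^ 3) / (4 * (B : ℂ) ^ 2 + c₁ * c₂))
    (hA₂ : A₂ = 4 * (B : ℂ) ^ 2 * c₁ / (4 * (B : ℂ) ^ 2 + c₁ * c₂))
    (hA₃ : A₃ = 4 * (B : ℂ) ^ 2 * c₂ / (4 * (B : ℂ) ^ 2 + c₁ * c₂))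
    (hA₄ : A₄ = (4 * (B : ℂ) ^ 3 - (B : ℂ) * c₁ * c₂) / (4 * (B : ℂ) ^ 2 + c₁ * c₂))
    (M : ℂ → Matrix (Fin 2) (Fin 2) ℂ)
    (hM : ∀ k : ℂ, M k =
      !![(k + A₁) / (k - (B : ℂ)), A₃ / (k + (B : ℂ));
         A₂ / (k - (B : ℂ)), (k + A₄) / (k + (B : ℂ))]) :
    Filter.Tendsto M (Filter.comap (fun k : ℂ => ‖k‖) Filter.atTop) (nhds 1) ∧
    Filter.Tendsto (fun k : ℂ => (k - (B : ℂ)) • ![M k 0 0, M k 1 0])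
      (nhdsWithin (B : ℂ) {(B : ℂ)}ᶜ)
      (nhds (c₁ • ![M (B : ℂ) 0 1, M (B : ℂ) 1 1])) ∧
    Filter.Tendsto (fun k : ℂ => (k + (B : ℂ)) • ![M k 0 1, M k 1 1])
      (nhdsWithin (-(B : ℂ)) {(-(B : ℂ))}ᶜ)
      (nhds (c₂ • ![M (-(B : ℂ)) 0 0, M (-(B : ℂ)) 1 0])) := by
  have hB' : (B : ℂ) ≠ 0 := Complex.ofReal_ne_zero.mpr hB
  have h2B : (B : ℂ) + (B : ℂ) ≠ 0 := by
    rw [← two_mul]; exact mul_ne_zero two_ne_zero hB'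
  have hcab : (Filter.comap (fun k : ℂ => ‖k‖) Filter.atTop) = cobounded ℂ := by
    rw [comap_norm_atTop]
  refine ⟨?_, ?_, ?_⟩
  · rw [hcab]
    refine tendsto_pi_nhds.mpr fun i => tendsto_pi_nhds.mpr fun j => ?_
    fin_cases i <;> fin_cases j <;>
      simp only [hM, Matrix.one_apply, Matrix.cons_val', Matrix.cons_val_zero,
        Matrix.cons_val_one, Matrix.head_cons, Matrix.head_fin_const, Matrix.empty_val',
        Matrix.cons_val_fin_one, Matrix.of_apply, Fin.mk_zero, Fin.mk_one] <;> norm_num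
    · exact aux_one_tendsto A₁ B
    · simpa [sub_neg_eq_add] using aux_div_tendsto A₃ (-(B : ℂ))
    · exact aux_div_tendsto A₂ B
    · simpa [sub_neg_eq_add] using aux_one_tendsto A₄ (-(B : ℂ))
  · have hv : c₁ • ![M (B : ℂ) 0 1, M (B : ℂ) 1 1] = ![(B : ℂ) + A₁, A₂] := by
      funext i; fin_cases i <;>
        simp [hM, hA₁, hA₂, hA₃, hA₄, smul_eq_mul] <;> field_simp [(by rwa [mul_comm] at hden : (B : ℂ) ^ 2 * 4 + c₁ * c₂ ≠ 0)] <;> ring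
    rw [hv]
    have hcont : Tendsto (fun k : ℂ => (![k + A₁, A₂] : Fin 2 → ℂ))
        (nhdsWithin (B : ℂ) {(B : ℂ)}ᶜ) (nhds ![(B : ℂ) + A₁, A₂]) := by
      apply Tendsto.mono_left _ nhdsWithin_le_nhds
      exact (tendsto_pi_nhds.mpr fun i => by
        fin_cases i <;> simp <;> exact (continuous_id.add continuous_const).tendsto _)
    apply hcont.congr'
    filter_upwards [self_mem_nhdsWithin] with k hk
    have hk' : k - (B : ℂ) ≠ 0 := sub_ne_zero.mpr hk
    funext i; fin_cases i <;> simp [hM, smul_eq_mul] <;> field_simp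
  · have hm2B : -(B : ℂ) - (B : ℂ) ≠ 0 := by
      intro h; apply h2B; linear_combination -h
    have hv : c₂ • ![M (-(B : ℂ)) 0 0, M (-(B : ℂ)) 1 0] = ![A₃, -(B : ℂ) + A₄] := by
      funext i; fin_cases i
      · simp only [hM, Matrix.smul_cons, Matrix.smul_empty, smul_eq_mul, Matrix.cons_val',
          Matrix.cons_val_zero, Matrix.empty_val', Matrix.cons_val_fin_one, Matrix.of_apply,
          Fin.isValue, Fin.zero_eta, Matrix.cons_val_one, Matrix.head_cons, Matrix.head_fin_const]
        rw [hA₁, hA₃, add_div' _ _ _ hden, div_div, mul_div_assoc',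
          div_eq_div_iff (mul_ne_zero hden hm2B) hden]
        ring
      · simp only [hM, Matrix.smul_cons, Matrix.smul_empty, smul_eq_mul, Matrix.cons_val',
          Matrix.cons_val_zero, Matrix.empty_val', Matrix.cons_val_fin_one, Matrix.of_apply,
          Fin.isValue, Fin.mk_one, Matrix.cons_val_one, Matrix.head_cons, Matrix.head_fin_const]
        rw [hA₂, hA₄, div_div, mul_div_assoc', add_div' _ _ _ hden,
          div_eq_div_iff (mul_ne_zero hden hm2B) hden]
        ring
    rw [hv]
    have hcont : Tendsto (fun k : ℂ => (![A₃, k + A₄] : Fin 2 → ℂ))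
        (nhdsWithin (-(B : ℂ)) {(-(B : ℂ))}ᶜ) (nhds ![A₃, -(B : ℂ) + A₄]) := by
      apply Tendsto.mono_left _ nhdsWithin_le_nhds
      exact (tendsto_pi_nhds.mpr fun i => by
        fin_cases i <;> simp <;> exact (continuous_id.add continuous_const).tendsto _)
    apply hcont.congr'
    filter_upwards [self_mem_nhdsWithin] with k hk
    have hk' : k + (B : ℂ) ≠ 0 := by
      intro h; exact hk (eq_neg_of_add_eq_zero_left h)
    funext i; fin_cases i <;> simp [hM, smul_eq_mul] <;> field_simp
end
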